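/- arXiv:2308.16366 — 7 statements merged into one kernel-verified Lean document; each statement's English description precedes it below -/
import Mathlib

section
/- For every integer m ≥ 1, the group presented by generators r, f, z and relations r^m = z, z^2 = 1, f^2 = 1, (r f)^2 = 1, z r = r z, z f = f z is isomorphic to the dihedral group of order 4m (Mathlib's DihedralGroup (2*m)). In other words, the positive double cover of the dihedral group of order 2m has the structure of a dihedral group of order 4m. -/
/-!
The relation `r ^ m = z` eliminates `z`, and the remaining ones give `r ^ (2 m) = f ^ 2 =
(r f) ^ 2 = 1`, the standard presentation of `DihedralGroup (2 m)`; this yields a homomorphism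
from the dihedral group to the presented group. Conversely `r ↦ r 1`, `f ↦ sr 0`, `z ↦ r m`
respects all six relations because `r m` is central in `DihedralGroup (2 m)` (as `-m = m` in
`ZMod (2 m)`). The two homomorphisms are mutually inverse on generators.
-/

namespace Stmt0

/-- Generators of the presented group: a rotation `r`, a flip `f`
and the central element `z`. -/
inductive Gen | r | f | z

open FreeGroup in
/-- The relations `r^m = z`, `z^2 = 1`, `f^2 = 1`, `(r f)^2 = 1`,
`z r = r z`, `z f = f z`. -/
def rels (m : ℕ) : Set (FreeGroup Gen) :=
  { of Gen.r ^ m * (of Gen.z)⁻¹,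
    of Gen.z ^ 2,
    of Gen.f ^ 2,
    (of Gen.r * of Gen.f) ^ 2,
    of Gen.z * of Gen.r * (of Gen.r * of Gen.z)⁻¹,
    of Gen.z * of Gen.f * (of Gen.f * of Gen.z)⁻¹ }

end Stmt0

section ZModPowers

variable {G : Type*} [Group G] {n : ℕ}

def zmodPowersHom (a : G) (ha : a ^ n = 1) : Multiplicative (ZMod n) →* G :=
  AddMonoidHom.toMultiplicativeLeft <|
    ZMod.lift n ⟨zmultiplesHom (Additive G) (Additive.ofMul a), by
      rw [zmultiplesHom_apply, natCast_zsmul, ← ofMul_pow, ha, ofMul_one]⟩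

@[simp]
theorem zmodPowersHom_intCast (a : G) (ha : a ^ n = 1) (k : ℤ) :
    zmodPowersHom a ha (.ofAdd (k : ZMod n)) = a ^ k := by
  simp [zmodPowersHom]

@[simp]
theorem zmodPowersHom_natCast (a : G) (ha : a ^ n = 1) (k : ℕ) :
    zmodPowersHom a ha (.ofAdd (k : ZMod n)) = a ^ k := by
  simpa using zmodPowersHom_intCast a ha k

theorem zpow_mul_eq_mul_zpow_neg {a b : G} (hb : b ^ 2 = 1) (hab : (a * b) ^ 2 = 1) (k : ℤ) :
    a ^ k * b = b * a ^ (-k) := by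
  have hb_inv : b⁻¹ = b := inv_eq_of_mul_eq_one_right (by rwa [← sq])
  have hconj : b * a * b⁻¹ = a⁻¹ := by
    rw [hb_inv]
    exact eq_inv_of_mul_eq_one_right (by rw [← hab, sq]; simp only [mul_assoc])
  rw [zpow_neg, ← inv_zpow, ← hconj, conj_zpow, hb_inv]
  simp only [← mul_assoc, ← sq, hb, one_mul]

theorem zmodPowersHom_mul_eq_mul_neg {a b : G} (ha : a ^ n = 1) (hb : b ^ 2 = 1)
    (hab : (a * b) ^ 2 = 1) (i : ZMod n) :
    zmodPowersHom a ha (.ofAdd i) * b = b * zmodPowersHom a ha (.ofAdd (-i)) := by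
  obtain ⟨k, rfl⟩ := ZMod.intCast_surjective i
  rw [← Int.cast_neg, zmodPowersHom_intCast, zmodPowersHom_intCast,
    zpow_mul_eq_mul_zpow_neg hb hab]

end ZModPowers

namespace DihedralGroup

variable {G : Type*} [Group G] {n : ℕ}

def lift (a b : G) (ha : a ^ n = 1) (hb : b ^ 2 = 1) (hab : (a * b) ^ 2 = 1) :
    DihedralGroup n →* G where
  toFun
    | r i => zmodPowersHom a ha (.ofAdd i)
    | sr i => b * zmodPowersHom a ha (.ofAdd i)
  map_one' := map_one _
  map_mul' := by
    have hrot := zmodPowersHom_mul_eq_mul_neg ha hb hab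
    rintro (i | i) (j | j)
    · simp only [r_mul_r, ofAdd_add, map_mul]
    · rw [r_mul_sr, sub_eq_neg_add, ← mul_assoc, hrot]
      simp only [ofAdd_add, map_mul, mul_assoc]
    · simp only [sr_mul_r, ofAdd_add, map_mul, mul_assoc]
    · rw [sr_mul_sr, sub_eq_neg_add, mul_assoc, ← mul_assoc _ b, hrot]
      simp only [← mul_assoc, ← sq, hb, one_mul, ofAdd_add, map_mul]

section lift

variable {a b : G} {ha : a ^ n = 1} {hb : b ^ 2 = 1} {hab : (a * b) ^ 2 = 1}

@[simp]
theorem lift_r_natCast (k : ℕ) : lift a b ha hb hab (r k) = a ^ k :=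
  zmodPowersHom_natCast a ha k

@[simp]
theorem lift_r_one : lift a b ha hb hab (r 1) = a := by
  simpa using lift_r_natCast (hb := hb) (hab := hab) 1

@[simp]
theorem lift_sr_zero : lift a b ha hb hab (sr 0) = b := by
  change b * zmodPowersHom a ha (.ofAdd 0) = b
  rw [ofAdd_zero, map_one, mul_one]

end lift

theorem hom_ext {f g : DihedralGroup n →* G} (hr : f (r 1) = g (r 1))
    (hsr : f (sr 0) = g (sr 0)) : f = g := by
  have hrot (i : ZMod n) : f (r i) = g (r i) := by
    obtain ⟨k, rfl⟩ := ZMod.intCast_surjective i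
    rw [← r_one_zpow, map_zpow, map_zpow, hr]
  ext (i | i)
  · exact hrot i
  · rw [← zero_add i, ← sr_mul_r, map_mul, map_mul, hsr, hrot]

end DihedralGroup

namespace Stmt0

open DihedralGroup PresentedGroup

variable {m : ℕ}

theorem of_r_pow : (of Gen.r : PresentedGroup (rels m)) ^ m = of Gen.z := by
  have h := one_of_mem (rels := rels m) (x := FreeGroup.of .r ^ m * (FreeGroup.of .z)⁻¹)
    (by simp [rels])
  rwa [map_mul, map_pow, map_inv, mul_inv_eq_one] at h

theorem of_z_sq : (of Gen.z : PresentedGroup (rels m)) ^ 2 = 1 := by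
  have h := one_of_mem (rels := rels m) (x := FreeGroup.of .z ^ 2) (by simp [rels])
  rwa [map_pow] at h

theorem of_f_sq : (of Gen.f : PresentedGroup (rels m)) ^ 2 = 1 := by
  have h := one_of_mem (rels := rels m) (x := FreeGroup.of .f ^ 2) (by simp [rels])
  rwa [map_pow] at h

theorem of_r_mul_of_f_sq : (of Gen.r * of Gen.f : PresentedGroup (rels m)) ^ 2 = 1 := by
  have h := one_of_mem (rels := rels m) (x := (FreeGroup.of .r * FreeGroup.of .f) ^ 2)
    (by simp [rels])
  rwa [map_pow, map_mul] at h

theorem of_r_pow_two_mul : (of Gen.r : PresentedGroup (rels m)) ^ (2 * m) = 1 := by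
  rw [mul_comm, pow_mul, of_r_pow, of_z_sq]

theorem natCast_add_self : (m : ZMod (2 * m)) + m = 0 := by
  rw [← Nat.cast_add, ← two_mul, ZMod.natCast_self]

def genToDihedral (m : ℕ) : Gen → DihedralGroup (2 * m)
  | .r => r 1
  | .f => sr 0
  | .z => r m

def toDihedral (m : ℕ) : PresentedGroup (rels m) →* DihedralGroup (2 * m) :=
  toGroup (f := genToDihedral m) <| by
    rintro _ (rfl | rfl | rfl | rfl | rfl | rfl) <;>
      simp [genToDihedral, sq, natCast_add_self, add_comm, add_left_comm]

@[simp]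
theorem toDihedral_of (g : Gen) : toDihedral m (of g) = genToDihedral m g :=
  toGroup.of _

def ofDihedral (m : ℕ) : DihedralGroup (2 * m) →* PresentedGroup (rels m) :=
  DihedralGroup.lift _ _ of_r_pow_two_mul of_f_sq of_r_mul_of_f_sq

theorem ofDihedral_comp_toDihedral : (ofDihedral m).comp (toDihedral m) = .id _ :=
  PresentedGroup.ext fun g => by cases g <;> simp [genToDihedral, ofDihedral, of_r_pow]

theorem toDihedral_comp_ofDihedral : (toDihedral m).comp (ofDihedral m) = .id _ :=
  DihedralGroup.hom_ext (by simp [ofDihedral, genToDihedral])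
    (by simp [ofDihedral, genToDihedral])

theorem presented_double_cover_iso_dihedral_general (m : ℕ) :
    Nonempty (PresentedGroup (rels m) ≃* DihedralGroup (2 * m)) :=
  ⟨(toDihedral m).toMulEquiv (ofDihedral m) ofDihedral_comp_toDihedral
    toDihedral_comp_ofDihedral⟩

/-- For every `m ≥ 1`, the group presented by generators `r, f, z` and relations
`r^m = z`, `z^2 = 1`, `f^2 = 1`, `(r f)^2 = 1`, `z r = r z`, `z f = f z`
is isomorphic to the dihedral group of order `4 m`. -/
theorem presented_double_cover_iso_dihedral (m : ℕ) (hm : 1 ≤ m) :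
    Nonempty (PresentedGroup (rels m) ≃* DihedralGroup (2 * m)) :=
  presented_double_cover_iso_dihedral_general m

end Stmt0
end

section
/- Let W̃ = W̃(m1,m2). Then W̃ is a finite group of cardinality 8·m1·m2. -/
/-!
Every element of `W̃` can be written as `r₁^a r₂^b f₁^e₁ f₂^e₂` with `a < 2m₁`, `b < m₂`,
`e₁, e₂ < 2`: the relations let one push `f₁`, `f₂` to the right, and `r₂^{m₂} = z = r₁^{m₁}`
absorbs the overflow of `b`. This gives at most `8 m₁ m₂` elements.

They are distinct because `W̃` acts on `(ℤ/2m₁m₂)² × {0,1}²`: `r₁` and `r₂` translate by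
`(m₂, m₂)` and `(m₁, -m₁)` (the two characters `r₁ ↦ 1/2m₁`, `r₂ ↦ ±1/2m₂` of `⟨r₁, r₂⟩`),
`f₁` and `f₂` act on the first factor by `(u, v) ↦ (-v, -u)` and `(u, v) ↦ (v, u)` and flip their
bit, and `f₂` moreover translates by `(m₁m₂, m₁m₂)` when the bit of `f₁` is set, which realises
`(f₁ f₂)² = z`. The `8 m₁ m₂` normal forms move the base point to `8 m₁ m₂` different points.
-/

namespace Stmt2

/-- Generators of the double cover `W̃(m1, m2)`. -/
inductive Gen | z | r1 | f1 | r2 | f2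

open FreeGroup in
/-- Defining relations of `W̃(m1, m2)`:
`r1^{m1} = z`, `r2^{m2} = z`, `f1^2 = 1`, `f2^2 = 1`, `(r1 f1)^2 = 1`, `(r2 f2)^2 = 1`,
`r1 r2 = r2 r1`, `r1 f2 = f2 r1`, `r2 f1 = f1 r2`, `(f1 f2)^2 = z`, `z^2 = 1`. -/
def rels (m1 m2 : ℕ) : Set (FreeGroup Gen) :=
  { of Gen.r1 ^ m1 * (of Gen.z)⁻¹,
    of Gen.r2 ^ m2 * (of Gen.z)⁻¹,
    of Gen.f1 ^ 2,
    of Gen.f2 ^ 2,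
    (of Gen.r1 * of Gen.f1) ^ 2,
    (of Gen.r2 * of Gen.f2) ^ 2,
    of Gen.r1 * of Gen.r2 * (of Gen.r2 * of Gen.r1)⁻¹,
    of Gen.r1 * of Gen.f2 * (of Gen.f2 * of Gen.r1)⁻¹,
    of Gen.r2 * of Gen.f1 * (of Gen.f1 * of Gen.r2)⁻¹,
    (of Gen.f1 * of Gen.f2) ^ 2 * (of Gen.z)⁻¹,
    of Gen.z ^ 2 }

/-- The double cover `W̃(m1, m2)` of `D_{2m1} × D_{2m2}`, as a presented group. -/
abbrev Wt (m1 m2 : ℕ) := PresentedGroup (rels m1 m2)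

def wz (m1 m2 : ℕ) : Wt m1 m2 := PresentedGroup.of Gen.z
def wr1 (m1 m2 : ℕ) : Wt m1 m2 := PresentedGroup.of Gen.r1
def wf1 (m1 m2 : ℕ) : Wt m1 m2 := PresentedGroup.of Gen.f1
def wr2 (m1 m2 : ℕ) : Wt m1 m2 := PresentedGroup.of Gen.r2
def wf2 (m1 m2 : ℕ) : Wt m1 m2 := PresentedGroup.of Gen.f2

lemma mul_zpow_eq_zpow_neg_mul {G : Type*} [Group G] {r f : G} (hf : f ^ 2 = 1)
    (hrf : (r * f) ^ 2 = 1) (i : ℤ) : f * r ^ i = r ^ (-i) * f := by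
  have hf' : f⁻¹ = f := inv_eq_of_mul_eq_one_left (by rw [← sq, hf])
  have hconj : f * r * f⁻¹ = r⁻¹ := by
    rw [hf', eq_inv_iff_mul_eq_one]
    calc f * r * f * r = r⁻¹ * (r * f * (r * f)) * r := by group
      _ = 1 := by rw [← sq, hrf]; group
  calc f * r ^ i = (f * r * f⁻¹) ^ i * f := by rw [conj_zpow]; group
    _ = r ^ (-i) * f := by rw [hconj, inv_zpow']

section Presentation

open PresentedGroup

variable {m1 m2 : ℕ}

local notation "𝐳" => wz m1 m2
local notation "r₁" => wr1 m1 m2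
local notation "r₂" => wr2 m1 m2
local notation "f₁" => wf1 m1 m2
local notation "f₂" => wf2 m1 m2

lemma wr1_pow : r₁ ^ m1 = 𝐳 := by
  have := mk_eq_mk_of_mul_inv_mem (rels := rels m1 m2) (x := .of .r1 ^ m1) (y := .of .z)
    (by simp [rels])
  rwa [map_pow] at this

lemma wr2_pow : r₂ ^ m2 = 𝐳 := by
  have := mk_eq_mk_of_mul_inv_mem (rels := rels m1 m2) (x := .of .r2 ^ m2) (y := .of .z)
    (by simp [rels])
  rwa [map_pow] at this

lemma wf1_sq : f₁ ^ 2 = 1 := by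
  have := one_of_mem (rels := rels m1 m2) (x := .of .f1 ^ 2) (by simp [rels])
  rwa [map_pow] at this

lemma wf2_sq : f₂ ^ 2 = 1 := by
  have := one_of_mem (rels := rels m1 m2) (x := .of .f2 ^ 2) (by simp [rels])
  rwa [map_pow] at this

lemma wr1_mul_wf1_sq : (r₁ * f₁) ^ 2 = 1 := by
  have := one_of_mem (rels := rels m1 m2) (x := (.of .r1 * .of .f1) ^ 2) (by simp [rels])
  rwa [map_pow, map_mul] at this

lemma wr2_mul_wf2_sq : (r₂ * f₂) ^ 2 = 1 := by
  have := one_of_mem (rels := rels m1 m2) (x := (.of .r2 * .of .f2) ^ 2) (by simp [rels])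
  rwa [map_pow, map_mul] at this

lemma commute_wr1_wr2 : Commute r₁ r₂ := by
  have := mk_eq_mk_of_mul_inv_mem (rels := rels m1 m2) (x := .of .r1 * .of .r2)
    (y := .of .r2 * .of .r1) (by simp [rels])
  rwa [map_mul, map_mul] at this

lemma commute_wr1_wf2 : Commute r₁ f₂ := by
  have := mk_eq_mk_of_mul_inv_mem (rels := rels m1 m2) (x := .of .r1 * .of .f2)
    (y := .of .f2 * .of .r1) (by simp [rels])
  rwa [map_mul, map_mul] at this

lemma commute_wr2_wf1 : Commute r₂ f₁ := by
  have := mk_eq_mk_of_mul_inv_mem (rels := rels m1 m2) (x := .of .r2 * .of .f1)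
    (y := .of .f1 * .of .r2) (by simp [rels])
  rwa [map_mul, map_mul] at this

lemma wf1_mul_wf2_sq : (f₁ * f₂) ^ 2 = 𝐳 := by
  have := mk_eq_mk_of_mul_inv_mem (rels := rels m1 m2) (x := (.of .f1 * .of .f2) ^ 2)
    (y := .of .z) (by simp [rels])
  rwa [map_pow, map_mul] at this

lemma wz_sq : 𝐳 ^ 2 = 1 := by
  have := one_of_mem (rels := rels m1 m2) (x := .of .z ^ 2) (by simp [rels])
  rwa [map_pow] at this

lemma wf1_inv : f₁⁻¹ = f₁ := inv_eq_of_mul_eq_one_left (by rw [← sq, wf1_sq])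

lemma wf2_inv : f₂⁻¹ = f₂ := inv_eq_of_mul_eq_one_left (by rw [← sq, wf2_sq])

lemma wr1_pow_two_mul : r₁ ^ (2 * m1) = 1 := by rw [pow_mul', wr1_pow, wz_sq]

lemma wf1_mul_wr1_zpow (i : ℤ) : f₁ * r₁ ^ i = r₁ ^ (-i) * f₁ :=
  mul_zpow_eq_zpow_neg_mul wf1_sq wr1_mul_wf1_sq i

lemma wf2_mul_wr2_zpow (j : ℤ) : f₂ * r₂ ^ j = r₂ ^ (-j) * f₂ :=
  mul_zpow_eq_zpow_neg_mul wf2_sq wr2_mul_wf2_sq j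

lemma commute_wz_wf1 : Commute 𝐳 f₁ := by
  have hz : r₁ ^ (-(m1 : ℤ)) = 𝐳 := by
    rw [zpow_neg, zpow_natCast, wr1_pow, inv_eq_of_mul_eq_one_left (by rw [← sq, wz_sq])]
  have := wf1_mul_wr1_zpow (m1 := m1) (m2 := m2) m1
  rw [hz, zpow_natCast, wr1_pow] at this
  exact this.symm

lemma wf2_mul_wf1 : f₂ * f₁ = 𝐳 * (f₁ * f₂) := by
  calc f₂ * f₁ = f₁⁻¹ * (f₁ * f₂ * (f₁ * f₂)) * f₂⁻¹ := by group
    _ = f₁ * 𝐳 * f₂ := by rw [← sq, wf1_mul_wf2_sq, wf1_inv, wf2_inv]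
    _ = 𝐳 * (f₁ * f₂) := by rw [← commute_wz_wf1.eq, mul_assoc]

lemma wf2_mul_wf1_pow (k : ℕ) : f₂ * f₁ ^ k = 𝐳 ^ k * f₁ ^ k * f₂ := by
  induction k with
  | zero => simp
  | succ k ih =>
    rw [pow_succ, ← mul_assoc, ih, mul_assoc, wf2_mul_wf1, ← mul_assoc, ← mul_assoc,
      mul_assoc _ (f₁ ^ k), ← (commute_wz_wf1.pow_right k).eq, ← mul_assoc, ← pow_succ,
      mul_assoc _ (f₁ ^ k), ← pow_succ]

lemma wr2_zpow_eq (j : ℤ) : r₂ ^ j = r₁ ^ (m1 * (j / m2)) * r₂ ^ (j % m2) := by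
  conv_lhs => rw [← Int.mul_ediv_add_emod j m2]
  rw [zpow_add, zpow_mul, zpow_natCast, wr2_pow, ← wr1_pow, ← zpow_natCast, ← zpow_mul]

def word (i j : ℤ) (k l : ℕ) : Wt m1 m2 := r₁ ^ i * r₂ ^ j * f₁ ^ k * f₂ ^ l

lemma wr1_zpow_mul_word (p i j : ℤ) (k l : ℕ) :
    r₁ ^ p * word i j k l = word (p + i) j k l := by
  simp only [word, ← mul_assoc, ← zpow_add]

lemma wr2_zpow_mul_word (q i j : ℤ) (k l : ℕ) :
    r₂ ^ q * word i j k l = word i (q + j) k l := by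
  simp only [word, ← mul_assoc]
  rw [← (commute_wr1_wr2.zpow_zpow i q).eq, mul_assoc (r₁ ^ i), ← zpow_add]

lemma wf1_mul_word (i j : ℤ) (k l : ℕ) :
    f₁ * word i j k l = word (-i) j (k + 1) l := by
  simp only [word, ← mul_assoc]
  rw [wf1_mul_wr1_zpow, mul_assoc _ f₁, ← (commute_wr2_wf1.zpow_left j).eq, ← mul_assoc,
    mul_assoc _ f₁, ← pow_succ']

lemma wf2_mul_word (i j : ℤ) (k l : ℕ) :
    f₂ * word i j k l = word (i + m1 * k) (-j) k (l + 1) := by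
  simp only [word, mul_assoc]
  rw [(commute_wr1_wf2.zpow_left i).symm.left_comm, ← mul_assoc f₂, wf2_mul_wr2_zpow,
    mul_assoc, ← mul_assoc f₂, wf2_mul_wf1_pow, ← wr1_pow, ← pow_mul, ← zpow_natCast]
  simp only [mul_assoc]
  rw [((commute_wr1_wr2.zpow_zpow _ _).symm).left_comm, ← mul_assoc, ← zpow_add, ← pow_succ']
  push_cast
  rfl

lemma of_or_inv_eq (g : Gen) : ∀ x ∈ ({.of g, (.of g)⁻¹} : Set (Wt m1 m2)),
    (∃ p : ℤ, x = r₁ ^ p) ∨ (∃ q : ℤ, x = r₂ ^ q) ∨ x = f₁ ∨ x = f₂ := by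
  have hz : 𝐳 = r₁ ^ (m1 : ℤ) := by rw [zpow_natCast, wr1_pow]
  cases g <;> rintro x (rfl | rfl)
  · exact .inl ⟨m1, hz⟩
  · exact .inl ⟨-m1, by rw [zpow_neg, ← hz]; rfl⟩
  · exact .inl ⟨1, (zpow_one _).symm⟩
  · exact .inl ⟨-1, (zpow_neg_one _).symm⟩
  · exact .inr (.inr (.inl rfl))
  · exact .inr (.inr (.inl wf1_inv))
  · exact .inr (.inl ⟨1, (zpow_one _).symm⟩)
  · exact .inr (.inl ⟨-1, (zpow_neg_one _).symm⟩)
  · exact .inr (.inr (.inr rfl))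
  · exact .inr (.inr (.inr wf2_inv))

lemma exists_eq_word (w : Wt m1 m2) : ∃ i j k l, w = word i j k l := by
  have mul_word : ∀ x : Wt m1 m2,
      ((∃ p : ℤ, x = r₁ ^ p) ∨ (∃ q : ℤ, x = r₂ ^ q) ∨ x = f₁ ∨ x = f₂) →
      ∀ y, (∃ i j k l, y = word i j k l) → ∃ i j k l, x * y = word i j k l := by
    rintro x (⟨p, rfl⟩ | ⟨q, rfl⟩ | rfl | rfl) _ ⟨i, j, k, l, rfl⟩
    exacts [⟨_, _, _, _, wr1_zpow_mul_word p i j k l⟩, ⟨_, _, _, _, wr2_zpow_mul_word q i j k l⟩,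
      ⟨_, _, _, _, wf1_mul_word i j k l⟩, ⟨_, _, _, _, wf2_mul_word i j k l⟩]
  have hw : w ∈ Subgroup.closure (Set.range (PresentedGroup.of : Gen → Wt m1 m2)) := by
    simp [closure_range_of]
  induction hw using Subgroup.closure_induction_left with
  | one => exact ⟨0, 0, 0, 0, by simp [word]⟩
  | mul_left x hx y _ ih =>
    obtain ⟨g, rfl⟩ := hx
    exact mul_word _ (of_or_inv_eq g _ (.inl rfl)) y ih
  | inv_mul_cancel x hx y _ ih =>
    obtain ⟨g, rfl⟩ := hx
    exact mul_word _ (of_or_inv_eq g _ (.inr rfl)) y ih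

def normalForm (x : ZMod (2 * m1) × ZMod m2 × Bool × Bool) : Wt m1 m2 :=
  word x.1.val x.2.1.val x.2.2.1.toNat x.2.2.2.toNat

variable [NeZero m1] [NeZero m2]

lemma word_eq_normalForm (i j : ℤ) (k l : ℕ) :
    (word i j k l : Wt m1 m2) =
      normalForm ((i + m1 * (j / m2) : ℤ), (j : ZMod m2), k.bodd, l.bodd) := by
  simp only [normalForm, word, ZMod.val_intCast, ← Nat.mod_two_of_bodd,
    ← pow_eq_pow_mod _ wf1_sq, ← pow_eq_pow_mod _ wf2_sq, wr2_zpow_eq j,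
    ← zpow_eq_zpow_emod' _ wr1_pow_two_mul, zpow_add, mul_assoc]

lemma normalForm_surjective : Function.Surjective (normalForm (m1 := m1) (m2 := m2)) := by
  intro w
  obtain ⟨i, j, k, l, rfl⟩ := exists_eq_word w
  exact ⟨_, (word_eq_normalForm i j k l).symm⟩

end Presentation

section Model

variable {G : Type*} [AddCommGroup G]

def translate (t : G × G) : Equiv.Perm ((G × G) × Bool × Bool) :=
  (Equiv.addRight t).prodCongr (Equiv.refl _)

def reflect₁ : Equiv.Perm ((G × G) × Bool × Bool) :=
  Function.Involutive.toPerm (fun y => ((-y.1.2, -y.1.1), !y.2.1, y.2.2)) (by intro y; simp)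

def reflect₂ (h : G) : Equiv.Perm ((G × G) × Bool × Bool) where
  toFun y := ((y.1.2, y.1.1) + bif y.2.1 then (h, h) else 0, y.2.1, !y.2.2)
  invFun y := ((y.1.2, y.1.1) - bif y.2.1 then (h, h) else 0, y.2.1, !y.2.2)
  left_inv := by rintro ⟨⟨u, v⟩, _ | _, e₂⟩ <;> simp
  right_inv := by rintro ⟨⟨u, v⟩, _ | _, e₂⟩ <;> simp

@[simp] lemma translate_apply (t : G × G) (y : (G × G) × Bool × Bool) :
    translate t y = (y.1 + t, y.2) := rfl

@[simp] lemma reflect₁_apply (y : (G × G) × Bool × Bool) :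
    reflect₁ y = ((-y.1.2, -y.1.1), !y.2.1, y.2.2) := rfl

@[simp] lemma reflect₂_apply (h : G) (y : (G × G) × Bool × Bool) :
    reflect₂ h y = ((y.1.2, y.1.1) + bif y.2.1 then (h, h) else 0, y.2.1, !y.2.2) := rfl

lemma translate_pow (t : G × G) (n : ℕ) : translate t ^ n = translate (n • t) := by
  induction n with
  | zero => ext <;> simp
  | succ n ih => ext y <;> simp [pow_succ, ih, succ_nsmul', add_assoc]

lemma commute_translate (s t : G × G) : Commute (translate s) (translate t) := by
  ext y <;> simp [add_right_comm]

lemma reflect₁_sq : (reflect₁ : Equiv.Perm ((G × G) × Bool × Bool)) ^ 2 = 1 := by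
  ext y <;> simp [sq]

lemma reflect₂_sq {h : G} (hh : h + h = 0) : reflect₂ h ^ 2 = 1 := by
  ext ⟨⟨u, v⟩, e₁, e₂⟩ <;> cases e₁ <;> simp [sq, add_assoc, hh]

lemma reflect₁_mul_translate (t : G × G) :
    reflect₁ * translate t = translate (-t.2, -t.1) * reflect₁ := by
  ext y <;> simp [add_comm]

lemma reflect₂_mul_translate (h : G) (t : G × G) :
    reflect₂ h * translate t = translate (t.2, t.1) * reflect₂ h := by
  ext y <;> simp [add_right_comm]

lemma translate_mul_reflect₁_sq {t : G × G} (ht : t.2 = t.1) :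
    (translate t * reflect₁) ^ 2 = 1 := by
  ext y <;> simp [sq, ht]

lemma translate_mul_reflect₂_sq {h : G} (hh : h + h = 0) {t : G × G} (ht : t.2 = -t.1) :
    (translate t * reflect₂ h) ^ 2 = 1 := by
  ext ⟨⟨u, v⟩, _ | _, e₂⟩ <;> simp [sq, ht, add_assoc, hh]

lemma reflect₁_mul_reflect₂_sq {h : G} (hh : h + h = 0) :
    (reflect₁ * reflect₂ h) ^ 2 = translate (h, h) := by
  ext ⟨⟨u, v⟩, e₁, e₂⟩ <;> cases e₁ <;> simp [sq, neg_eq_of_add_eq_zero_right hh, add_comm]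

end Model

section Representation

variable (m1 m2 : ℕ)

lemma mul_add_mul_eq_zero : (m1 * m2 : ZMod (2 * m1 * m2)) + m1 * m2 = 0 := by
  rw [← two_mul, ← mul_assoc]
  exact_mod_cast ZMod.natCast_self (2 * m1 * m2)

def genPerm : Gen → Equiv.Perm ((ZMod (2 * m1 * m2) × ZMod (2 * m1 * m2)) × Bool × Bool)
  | .z => translate (m1 * m2, m1 * m2)
  | .r1 => translate (m2, m2)
  | .r2 => translate (m1, -m1)
  | .f1 => reflect₁
  | .f2 => reflect₂ (m1 * m2)

lemma genPerm_rels : ∀ r ∈ rels m1 m2, FreeGroup.lift (genPerm m1 m2) r = 1 := by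
  have hh := mul_add_mul_eq_zero m1 m2
  have hneg : -(m1 * m2 : ZMod (2 * m1 * m2)) = m1 * m2 := neg_eq_of_add_eq_zero_right hh
  simp only [rels, Set.mem_insert_iff, Set.mem_singleton_iff]
  rintro r (rfl | rfl | rfl | rfl | rfl | rfl | rfl | rfl | rfl | rfl | rfl) <;>
    simp only [map_mul, map_pow, map_inv, FreeGroup.lift_apply_of, genPerm, mul_inv_eq_one]
  · rw [translate_pow]; congr 1; ext <;> simp
  · rw [translate_pow]; congr 1; ext <;> simp [mul_comm (m2 : ZMod (2 * m1 * m2)), hneg]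
  · exact reflect₁_sq
  · exact reflect₂_sq hh
  · exact translate_mul_reflect₁_sq rfl
  · exact translate_mul_reflect₂_sq hh rfl
  · exact commute_translate _ _
  · simp [reflect₂_mul_translate]
  · simp [reflect₁_mul_translate]
  · exact reflect₁_mul_reflect₂_sq hh
  · rw [translate_pow]; ext <;> simp [two_mul, hh]

def rep : Wt m1 m2 →* Equiv.Perm ((ZMod (2 * m1 * m2) × ZMod (2 * m1 * m2)) × Bool × Bool) :=
  PresentedGroup.toGroup (genPerm_rels m1 m2)

lemma rep_normalForm (x : ZMod (2 * m1) × ZMod m2 × Bool × Bool) :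
    rep m1 m2 (normalForm x) ((0, 0), false, false) =
      (((x.1.val * m2 + x.2.1.val * m1 : ZMod (2 * m1 * m2)),
        (x.1.val * m2 - x.2.1.val * m1 : ZMod (2 * m1 * m2))), x.2.2.1, x.2.2.2) := by
  obtain ⟨a, b, _ | _, _ | _⟩ := x <;>
    simp [normalForm, word, rep, wr1, wr2, wf1, wf2, genPerm, translate_pow, sub_eq_add_neg] <;>
    exact ⟨add_comm _ _, add_comm _ _⟩

end Representation

section Injectivity

variable {m1 m2 : ℕ} [NeZero m1] [NeZero m2]

lemma eq_of_val_mul_add_val_mul {a a' : ZMod (2 * m1)} {b b' : ZMod m2}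
    (hs : (a.val * m2 + b.val * m1 : ZMod (2 * m1 * m2)) = a'.val * m2 + b'.val * m1)
    (hd : (a.val * m2 - b.val * m1 : ZMod (2 * m1 * m2)) = a'.val * m2 - b'.val * m1) :
    a = a' ∧ b = b' := by
  have hb : b = b' := by
    have h : ((2 * m1 * b.val : ℕ) : ZMod (2 * m1 * m2)) = (2 * m1 * b'.val : ℕ) := by
      push_cast; linear_combination hs - hd
    rw [ZMod.natCast_eq_natCast_iff] at h
    simpa using (ZMod.natCast_eq_natCast_iff _ _ _).2
      (Nat.ModEq.mul_left_cancel' (NeZero.ne (2 * m1)) h)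
  subst hb
  have h : ((a.val * m2 : ℕ) : ZMod (2 * m1 * m2)) = (a'.val * m2 : ℕ) := by
    push_cast; linear_combination hs
  rw [ZMod.natCast_eq_natCast_iff] at h
  refine ⟨?_, rfl⟩
  simpa using (ZMod.natCast_eq_natCast_iff _ _ _).2 (Nat.ModEq.mul_right_cancel' (NeZero.ne m2) h)

lemma normalForm_injective : Function.Injective (normalForm (m1 := m1) (m2 := m2)) := by
  rintro ⟨a, b, e₁, e₂⟩ ⟨a', b', e₁', e₂'⟩ h
  have h' := congrArg (fun w => rep m1 m2 w ((0, 0), false, false)) h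
  simp only [rep_normalForm, Prod.mk.injEq] at h'
  obtain ⟨⟨hs, hd⟩, rfl, rfl⟩ := h'
  obtain ⟨rfl, rfl⟩ := eq_of_val_mul_add_val_mul hs hd
  rfl

end Injectivity

/-- `W̃(m1,m2)` is a finite group of cardinality `8 m1 m2`. -/
theorem card_Wt (m1 m2 : ℕ) (h1 : 1 ≤ m1) (h2 : 1 ≤ m2) :
    Finite (Wt m1 m2) ∧ Nat.card (Wt m1 m2) = 8 * m1 * m2 := by
  have : NeZero m1 := ⟨by omega⟩
  have : NeZero m2 := ⟨by omega⟩
  have hbij : Function.Bijective (normalForm (m1 := m1) (m2 := m2)) :=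
    ⟨normalForm_injective, normalForm_surjective⟩
  refine ⟨.of_surjective _ hbij.2, ?_⟩
  rw [← Nat.card_eq_of_bijective _ hbij]
  simp only [Nat.card_prod, Nat.card_zmod, Nat.card_eq_fintype_card (α := Bool), Fintype.card_bool]
  ring

end Stmt2
end

section
/- Let W̃ = W̃(m1,m2). The subgroup of W̃ generated by r1 and r2 is isomorphic to the quotient group (ZMod (2*m1) × ZMod (2*m2)) / H, where H is the subgroup generated by the element (m1, m2), via an isomorphism sending r1 to the class of (1,0) and r2 to the class of (0,1). In particular this subgroup is abelian of order 2·m1·m2. -/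
/-
The rotations r1, r2 commute, r1^(2 m1) = r2^(2 m2) = 1 and r1^m1 r2^m2 = z^2 = 1, so
(i, j) ↦ r1^i r2^j is a homomorphism from Q = (ℤ/2m1 × ℤ/2m2)/⟨(m1, m2)⟩ onto ⟨r1, r2⟩.
It is injective because W̃ acts on Q × Bool with r1, r2 translating the first coordinate, and
translations of Q act faithfully: f1 acts by (q, s) ↦ (-σ q, ¬s) and f2 by
(q, s) ↦ (σ q + [s] half, s), where σ negates the second coordinate of Q and half, the class
of (m1, 0), is the image of z.
-/

namespace Stmt3

/-- Generators of the double cover `W̃(m1, m2)`. -/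
inductive Gen | z | r1 | f1 | r2 | f2

open FreeGroup in
/-- Defining relations of `W̃(m1, m2)`:
`r1^{m1} = z`, `r2^{m2} = z`, `f1^2 = 1`, `f2^2 = 1`, `(r1 f1)^2 = 1`, `(r2 f2)^2 = 1`,
`r1 r2 = r2 r1`, `r1 f2 = f2 r1`, `r2 f1 = f1 r2`, `(f1 f2)^2 = z`, `z^2 = 1`. -/
def rels (m1 m2 : ℕ) : Set (FreeGroup Gen) :=
  { of Gen.r1 ^ m1 * (of Gen.z)⁻¹,
    of Gen.r2 ^ m2 * (of Gen.z)⁻¹,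
    of Gen.f1 ^ 2,
    of Gen.f2 ^ 2,
    (of Gen.r1 * of Gen.f1) ^ 2,
    (of Gen.r2 * of Gen.f2) ^ 2,
    of Gen.r1 * of Gen.r2 * (of Gen.r2 * of Gen.r1)⁻¹,
    of Gen.r1 * of Gen.f2 * (of Gen.f2 * of Gen.r1)⁻¹,
    of Gen.r2 * of Gen.f1 * (of Gen.f1 * of Gen.r2)⁻¹,
    (of Gen.f1 * of Gen.f2) ^ 2 * (of Gen.z)⁻¹,
    of Gen.z ^ 2 }

/-- The double cover `W̃(m1, m2)` of `D_{2m1} × D_{2m2}`, as a presented group. -/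
abbrev Wt (m1 m2 : ℕ) := PresentedGroup (rels m1 m2)

def wz (m1 m2 : ℕ) : Wt m1 m2 := PresentedGroup.of Gen.z
def wr1 (m1 m2 : ℕ) : Wt m1 m2 := PresentedGroup.of Gen.r1
def wf1 (m1 m2 : ℕ) : Wt m1 m2 := PresentedGroup.of Gen.f1
def wr2 (m1 m2 : ℕ) : Wt m1 m2 := PresentedGroup.of Gen.r2
def wf2 (m1 m2 : ℕ) : Wt m1 m2 := PresentedGroup.of Gen.f2

section ZModHom

variable {G : Type*} [Group G]

theorem neg_natCast_eq_self (n : ℕ) : -(n : ZMod (2 * n)) = n :=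
  neg_eq_of_add_eq_zero_left <| by rw [← Nat.cast_add, ← two_mul, ZMod.natCast_self]

theorem addOrderOf_natCast_eq_two {n : ℕ} (hn : 1 ≤ n) : addOrderOf (n : ZMod (2 * n)) = 2 := by
  rw [ZMod.addOrderOf_coe _ (by omega), Nat.gcd_mul_left_left, Nat.mul_div_cancel _ hn]

def zmodHom {n : ℕ} (x : G) (hx : x ^ n = 1) : ZMod n →+ Additive G :=
  ZMod.lift n ⟨zmultiplesHom _ (Additive.ofMul x), by simp [← ofMul_pow, hx]⟩

theorem zmodHom_intCast {n : ℕ} (x : G) (hx : x ^ n = 1) (k : ℤ) :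
    zmodHom x hx k = Additive.ofMul (x ^ k) := by
  simp [zmodHom, ZMod.lift_coe]

def zmodProdHom {n₁ n₂ : ℕ} (x y : G) (hx : x ^ n₁ = 1) (hy : y ^ n₂ = 1) (hxy : Commute x y) :
    ZMod n₁ × ZMod n₂ →+ Additive G :=
  (zmodHom x hx).noncommCoprod (zmodHom y hy) fun a b => by
    obtain ⟨i, rfl⟩ := ZMod.intCast_surjective a
    obtain ⟨j, rfl⟩ := ZMod.intCast_surjective b
    rw [zmodHom_intCast, zmodHom_intCast]
    exact hxy.zpow_zpow i j

theorem zmodProdHom_intCast {n₁ n₂ : ℕ} (x y : G) (hx : x ^ n₁ = 1) (hy : y ^ n₂ = 1)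
    (hxy : Commute x y) (i j : ℤ) :
    zmodProdHom x y hx hy hxy ((i : ZMod n₁), (j : ZMod n₂)) = Additive.ofMul (x ^ i * y ^ j) := by
  simp [zmodProdHom, AddMonoidHom.noncommCoprod_apply, zmodHom_intCast]

end ZModHom

section Relations

variable (m1 m2 : ℕ)

theorem wr1_pow : wr1 m1 m2 ^ m1 = wz m1 m2 := by
  rw [wr1, wz, PresentedGroup.of, PresentedGroup.of, ← map_pow]
  exact PresentedGroup.mk_eq_mk_of_mul_inv_mem (by simp [rels])

theorem wr2_pow : wr2 m1 m2 ^ m2 = wz m1 m2 := by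
  rw [wr2, wz, PresentedGroup.of, PresentedGroup.of, ← map_pow]
  exact PresentedGroup.mk_eq_mk_of_mul_inv_mem (by simp [rels])

theorem wz_sq : wz m1 m2 ^ 2 = 1 := by
  rw [wz, PresentedGroup.of, ← map_pow]
  exact PresentedGroup.one_of_mem (by simp [rels])

theorem commute_wr1_wr2 : Commute (wr1 m1 m2) (wr2 m1 m2) := by
  rw [Commute, SemiconjBy, wr1, wr2, PresentedGroup.of, PresentedGroup.of, ← map_mul, ← map_mul]
  exact PresentedGroup.mk_eq_mk_of_mul_inv_mem (by simp [rels])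

theorem wr1_pow_two_mul : wr1 m1 m2 ^ (2 * m1) = 1 := by
  rw [mul_comm, pow_mul, wr1_pow, wz_sq]

theorem wr2_pow_two_mul : wr2 m1 m2 ^ (2 * m2) = 1 := by
  rw [mul_comm, pow_mul, wr2_pow, wz_sq]

end Relations

abbrev RotGroup (m1 m2 : ℕ) : Type :=
  (ZMod (2 * m1) × ZMod (2 * m2)) ⧸
    AddSubgroup.zmultiples ((m1 : ZMod (2 * m1)), (m2 : ZMod (2 * m2)))

namespace RotGroup

variable (m1 m2 : ℕ)

def rot₁ : RotGroup m1 m2 := QuotientAddGroup.mk (1, 0)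

def rot₂ : RotGroup m1 m2 := QuotientAddGroup.mk (0, 1)

def half : RotGroup m1 m2 := QuotientAddGroup.mk ((m1 : ZMod (2 * m1)), 0)

theorem nsmul_rot₁ : m1 • rot₁ m1 m2 = half m1 m2 := by
  simp [rot₁, half, ← QuotientAddGroup.mk_nsmul]

theorem nsmul_rot₂ : m2 • rot₂ m1 m2 = half m1 m2 := by
  rw [rot₂, half, ← QuotientAddGroup.mk_nsmul, QuotientAddGroup.eq]
  simp [neg_natCast_eq_self]

theorem half_add_half : half m1 m2 + half m1 m2 = 0 := by
  rw [half, ← QuotientAddGroup.mk_add, Prod.mk_add_mk, ← Nat.cast_add, ← two_mul,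
    ZMod.natCast_self, add_zero, Prod.mk_zero_zero, QuotientAddGroup.mk_zero]

def negSnd : RotGroup m1 m2 →+ RotGroup m1 m2 :=
  QuotientAddGroup.map _ _ ((AddMonoidHom.id _).prodMap negAddMonoidHom) <| by
    rw [AddSubgroup.zmultiples_le, AddSubgroup.mem_comap]
    simp [neg_natCast_eq_self]

variable {m1 m2}

theorem negSnd_mk (a : ZMod (2 * m1)) (b : ZMod (2 * m2)) :
    negSnd m1 m2 (QuotientAddGroup.mk (a, b)) = QuotientAddGroup.mk (a, -b) := rfl

theorem negSnd_negSnd (q : RotGroup m1 m2) : negSnd m1 m2 (negSnd m1 m2 q) = q := by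
  induction q using QuotientAddGroup.induction_on with
  | H p => rw [negSnd_mk, negSnd_mk, neg_neg]

variable (m1 m2)

@[simp] theorem negSnd_rot₁ : negSnd m1 m2 (rot₁ m1 m2) = rot₁ m1 m2 := by simp [rot₁, negSnd_mk]

@[simp] theorem negSnd_rot₂ : negSnd m1 m2 (rot₂ m1 m2) = -rot₂ m1 m2 := by
  rw [rot₂, negSnd_mk, ← QuotientAddGroup.mk_neg, Prod.neg_mk, neg_zero]

@[simp] theorem negSnd_half : negSnd m1 m2 (half m1 m2) = half m1 m2 := by simp [half, negSnd_mk]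

variable {m1 m2}

theorem exists_eq_zsmul_add_zsmul (q : RotGroup m1 m2) :
    ∃ i j : ℤ, q = i • rot₁ m1 m2 + j • rot₂ m1 m2 := by
  obtain ⟨⟨a, b⟩, rfl⟩ := QuotientAddGroup.mk_surjective q
  obtain ⟨i, rfl⟩ := ZMod.intCast_surjective a
  obtain ⟨j, rfl⟩ := ZMod.intCast_surjective b
  refine ⟨i, j, ?_⟩
  simp [rot₁, rot₂, ← QuotientAddGroup.mk_zsmul, ← QuotientAddGroup.mk_add]

variable (m1 m2)

theorem card (h1 : 1 ≤ m1) (h2 : 1 ≤ m2) : Nat.card (RotGroup m1 m2) = 2 * m1 * m2 := by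
  have hH : Nat.card (AddSubgroup.zmultiples ((m1 : ZMod (2 * m1)), (m2 : ZMod (2 * m2)))) = 2 := by
    rw [Nat.card_zmultiples, Prod.addOrderOf, addOrderOf_natCast_eq_two h1,
      addOrderOf_natCast_eq_two h2, Nat.lcm_self]
  have := AddSubgroup.card_eq_card_quotient_mul_card_addSubgroup
    (AddSubgroup.zmultiples ((m1 : ZMod (2 * m1)), (m2 : ZMod (2 * m2))))
  rw [hH, Nat.card_prod, Nat.card_zmod, Nat.card_zmod] at this
  linarith

open Equiv

def shift : Multiplicative (RotGroup m1 m2) →* Perm (RotGroup m1 m2 × Bool) where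
  toFun q := (Equiv.addLeft q.toAdd).prodCongr (Equiv.refl Bool)
  map_one' := by ext ⟨p, s⟩ <;> simp
  map_mul' q q' := by ext ⟨p, s⟩ <;> simp [add_assoc]

variable {m1 m2}

@[simp] theorem shift_apply (q : Multiplicative (RotGroup m1 m2)) (x : RotGroup m1 m2 × Bool) :
    shift m1 m2 q x = (q.toAdd + x.1, x.2) := rfl

theorem shift_injective : Function.Injective (shift m1 m2) :=
  (injective_iff_map_eq_one _).2 fun q hq => by
    simpa using congrArg (fun σ : Perm _ => (σ (0, false)).1) hq

@[simp] theorem shift_pow (q : RotGroup m1 m2) (n : ℕ) :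
    shift m1 m2 (.ofAdd q) ^ n = shift m1 m2 (.ofAdd (n • q)) := (map_pow _ _ _).symm

@[simp] theorem shift_symm_apply (q : Multiplicative (RotGroup m1 m2)) (x : RotGroup m1 m2 × Bool) :
    (shift m1 m2 q).symm x = (-q.toAdd + x.1, x.2) := by
  rw [Equiv.symm_apply_eq]; simp

variable (m1 m2)

def reflect₁ : Perm (RotGroup m1 m2 × Bool) :=
  Function.Involutive.toPerm (fun x => (-negSnd m1 m2 x.1, !x.2)) fun x => by simp [negSnd_negSnd]

-- The twist by `half` on the sheet `true` is what makes `(f1 f2)^2` act as `z`.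
def reflect₂ : Perm (RotGroup m1 m2 × Bool) :=
  Function.Involutive.toPerm (fun x => (negSnd m1 m2 x.1 + cond x.2 (half m1 m2) 0, x.2))
    fun ⟨q, s⟩ => by cases s <;> simp [negSnd_negSnd, add_assoc, half_add_half]

@[simp] theorem reflect₁_apply (x : RotGroup m1 m2 × Bool) :
    reflect₁ m1 m2 x = (-negSnd m1 m2 x.1, !x.2) := rfl

@[simp] theorem reflect₂_apply (x : RotGroup m1 m2 × Bool) :
    reflect₂ m1 m2 x = (negSnd m1 m2 x.1 + cond x.2 (half m1 m2) 0, x.2) := rfl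

@[simp] theorem reflect₁_symm : (reflect₁ m1 m2).symm = reflect₁ m1 m2 :=
  Function.Involutive.toPerm_symm _

@[simp] theorem reflect₂_symm : (reflect₂ m1 m2).symm = reflect₂ m1 m2 :=
  Function.Involutive.toPerm_symm _

def modelGen : Gen → Perm (RotGroup m1 m2 × Bool)
  | .z => shift m1 m2 (.ofAdd (half m1 m2))
  | .r1 => shift m1 m2 (.ofAdd (rot₁ m1 m2))
  | .f1 => reflect₁ m1 m2
  | .r2 => shift m1 m2 (.ofAdd (rot₂ m1 m2))
  | .f2 => reflect₂ m1 m2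

theorem modelGen_rels : ∀ r ∈ rels m1 m2, FreeGroup.lift (modelGen m1 m2) r = 1 := by
  rintro r (rfl | rfl | rfl | rfl | rfl | rfl | rfl | rfl | rfl | rfl | rfl) <;>
    refine Equiv.ext fun ⟨q, s⟩ => ?_ <;> cases s <;>
    simp [modelGen, sq, nsmul_rot₁, nsmul_rot₂, negSnd_negSnd] <;>
    abel_nf <;> simp [two_zsmul, half_add_half]

def model : Wt m1 m2 →* Perm (RotGroup m1 m2 × Bool) :=
  PresentedGroup.toGroup (modelGen_rels m1 m2)

def rotHom : Multiplicative (RotGroup m1 m2) →* Wt m1 m2 :=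
  AddMonoidHom.toMultiplicativeLeft <| QuotientAddGroup.lift _
    (zmodProdHom _ _ (wr1_pow_two_mul m1 m2) (wr2_pow_two_mul m1 m2) (commute_wr1_wr2 m1 m2)) <| by
      rw [AddSubgroup.zmultiples_le, AddMonoidHom.mem_ker]
      have := zmodProdHom_intCast _ _ (wr1_pow_two_mul m1 m2) (wr2_pow_two_mul m1 m2)
        (commute_wr1_wr2 m1 m2) m1 m2
      rw [Int.cast_natCast, Int.cast_natCast] at this
      rw [this, zpow_natCast, zpow_natCast, wr1_pow, wr2_pow, ← sq, wz_sq, ofMul_one]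

theorem rotHom_rot₁ : rotHom m1 m2 (.ofAdd (rot₁ m1 m2)) = wr1 m1 m2 := by
  have := zmodProdHom_intCast _ _ (wr1_pow_two_mul m1 m2) (wr2_pow_two_mul m1 m2)
    (commute_wr1_wr2 m1 m2) 1 0
  simp only [Int.cast_one, Int.cast_zero, zpow_one, zpow_zero, mul_one] at this
  exact congrArg Additive.toMul this

theorem rotHom_rot₂ : rotHom m1 m2 (.ofAdd (rot₂ m1 m2)) = wr2 m1 m2 := by
  have := zmodProdHom_intCast _ _ (wr1_pow_two_mul m1 m2) (wr2_pow_two_mul m1 m2)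
    (commute_wr1_wr2 m1 m2) 0 1
  simp only [Int.cast_one, Int.cast_zero, zpow_one, zpow_zero, one_mul] at this
  exact congrArg Additive.toMul this

theorem rotHom_zsmul_add_zsmul (i j : ℤ) :
    rotHom m1 m2 (.ofAdd (i • rot₁ m1 m2 + j • rot₂ m1 m2)) = wr1 m1 m2 ^ i * wr2 m1 m2 ^ j := by
  rw [ofAdd_add, ofAdd_zsmul, ofAdd_zsmul, map_mul, map_zpow, map_zpow, rotHom_rot₁, rotHom_rot₂]

theorem model_comp_rotHom : (model m1 m2).comp (rotHom m1 m2) = shift m1 m2 := by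
  refine MonoidHom.ext fun q => ?_
  obtain ⟨i, j, hq⟩ := exists_eq_zsmul_add_zsmul q.toAdd
  rw [MonoidHom.comp_apply, ← ofAdd_toAdd q, hq, rotHom_zsmul_add_zsmul, map_mul, map_zpow,
    map_zpow, wr1, wr2, model, PresentedGroup.toGroup.of, PresentedGroup.toGroup.of]
  simp [modelGen, ← map_zpow, ← map_mul]

theorem rotHom_injective : Function.Injective (rotHom m1 m2) :=
  .of_comp (f := model m1 m2) <| by
    rw [← MonoidHom.coe_comp, model_comp_rotHom]
    exact shift_injective

theorem range_rotHom : (rotHom m1 m2).range = Subgroup.closure {wr1 m1 m2, wr2 m1 m2} := by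
  refine le_antisymm ?_ (Subgroup.closure_le _ |>.2 ?_)
  · rintro _ ⟨q, rfl⟩
    obtain ⟨i, j, hq⟩ := exists_eq_zsmul_add_zsmul q.toAdd
    rw [← ofAdd_toAdd q, hq, rotHom_zsmul_add_zsmul]
    exact mul_mem (zpow_mem (Subgroup.subset_closure (by simp)) i)
      (zpow_mem (Subgroup.subset_closure (by simp)) j)
  · rintro _ (rfl | rfl)
    exacts [⟨_, rotHom_rot₁ m1 m2⟩, ⟨_, rotHom_rot₂ m1 m2⟩]

end RotGroup

/-- The subgroup of `W̃(m1,m2)` generated by `r1` and `r2` is isomorphic to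
`(ZMod (2 m1) × ZMod (2 m2)) / ⟨(m1, m2)⟩`, via an isomorphism sending `r1` to the
class of `(1,0)` and `r2` to the class of `(0,1)`; in particular it is abelian of
order `2 m1 m2`. -/
theorem even_subgroup_iso (m1 m2 : ℕ) (h1 : 1 ≤ m1) (h2 : 1 ≤ m2) :
    (∃ φ : (Subgroup.closure {wr1 m1 m2, wr2 m1 m2} : Subgroup (Wt m1 m2)) ≃*
        Multiplicative ((ZMod (2 * m1) × ZMod (2 * m2)) ⧸
          AddSubgroup.zmultiples ((m1 : ZMod (2 * m1)), (m2 : ZMod (2 * m2)))),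
      φ ⟨wr1 m1 m2, Subgroup.subset_closure (Set.mem_insert _ _)⟩ =
        Multiplicative.ofAdd
          (QuotientAddGroup.mk ((1 : ZMod (2 * m1)), (0 : ZMod (2 * m2)))) ∧
      φ ⟨wr2 m1 m2, Subgroup.subset_closure (Set.mem_insert_of_mem _ rfl)⟩ =
        Multiplicative.ofAdd
          (QuotientAddGroup.mk ((0 : ZMod (2 * m1)), (1 : ZMod (2 * m2))))) ∧
    (∀ a b : (Subgroup.closure {wr1 m1 m2, wr2 m1 m2} : Subgroup (Wt m1 m2)),
      a * b = b * a) ∧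
    Nat.card (Subgroup.closure {wr1 m1 m2, wr2 m1 m2} : Subgroup (Wt m1 m2))
      = 2 * m1 * m2 := by
  let e : Multiplicative (RotGroup m1 m2) ≃* Subgroup.closure {wr1 m1 m2, wr2 m1 m2} :=
    (MonoidHom.ofInjective (RotGroup.rotHom_injective m1 m2)).trans
      (MulEquiv.subgroupCongr (RotGroup.range_rotHom m1 m2))
  refine ⟨⟨e.symm, ?_, ?_⟩, fun a b => e.symm.injective ?_, ?_⟩
  · exact e.symm_apply_eq.2 (Subtype.ext (RotGroup.rotHom_rot₁ m1 m2).symm)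
  · exact e.symm_apply_eq.2 (Subtype.ext (RotGroup.rotHom_rot₂ m1 m2).symm)
  · rw [map_mul, map_mul, mul_comm]
  · rw [← Nat.card_congr e.toEquiv, Nat.card_congr Multiplicative.toAdd, RotGroup.card m1 m2 h1 h2]

end Stmt3
end

section
/- Let W̃ = W̃(m1,m2) and let ℓ1, ℓ2 be odd integers. The assignments defining U(ℓ1,ℓ2) respect all defining relations of W̃ and hence define a group representation U(ℓ1,ℓ2) : W̃ → GL(ℂ⁴) in which z acts as −Id (a spin representation). Moreover, if in addition 0 < ℓ1 < m1 and 0 < ℓ2 < m2, then U(ℓ1,ℓ2) is irreducible, i.e., the only subspaces of ℂ⁴ invariant under all U(ℓ1,ℓ2)(w), w ∈ W̃, are 0 and ℂ⁴. -/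
/-!
The relations are verified directly on the matrices: the only nontrivial ones are
`R1 ^ m1 = -1`, which holds because `(ζ ^ ℓ) ^ m = (ζ ^ m) ^ ℓ = (-1) ^ ℓ = -1` for odd `ℓ`, and
`(F1 F2) ^ 2 = -1`.

For irreducibility, `0 < ℓ < m` makes `ζ ^ ℓ ≠ ζ ^ (-ℓ)` (as `ζ ^ 2` is a primitive `m`-th root
of unity), so the four coordinate lines of `ℂ⁴` carry pairwise distinct pairs of eigenvalues of the
commuting diagonal matrices `R1`, `R2`. The multipliers `g : Fin 4 → ℂ` with `g * p ≤ p` form a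
subalgebra containing the diagonals of `R1` and `R2`; since these separate the coordinates, Lagrange
interpolation puts every coordinate idempotent in it, so an invariant subspace contains the
coordinate components of each of its vectors. The monomial matrices `F1`, `F2` permute the
coordinate lines transitively, so a nonzero invariant subspace contains all of them.
-/

namespace Stmt5

/-- Generators of the double cover `W̃(m1, m2)`. -/
inductive Gen | z | r1 | f1 | r2 | f2

open FreeGroup in
/-- Defining relations of `W̃(m1, m2)`:
`r1^{m1} = z`, `r2^{m2} = z`, `f1^2 = 1`, `f2^2 = 1`, `(r1 f1)^2 = 1`, `(r2 f2)^2 = 1`,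
`r1 r2 = r2 r1`, `r1 f2 = f2 r1`, `r2 f1 = f1 r2`, `(f1 f2)^2 = z`, `z^2 = 1`. -/
def rels (m1 m2 : ℕ) : Set (FreeGroup Gen) :=
  { of Gen.r1 ^ m1 * (of Gen.z)⁻¹,
    of Gen.r2 ^ m2 * (of Gen.z)⁻¹,
    of Gen.f1 ^ 2,
    of Gen.f2 ^ 2,
    (of Gen.r1 * of Gen.f1) ^ 2,
    (of Gen.r2 * of Gen.f2) ^ 2,
    of Gen.r1 * of Gen.r2 * (of Gen.r2 * of Gen.r1)⁻¹,
    of Gen.r1 * of Gen.f2 * (of Gen.f2 * of Gen.r1)⁻¹,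
    of Gen.r2 * of Gen.f1 * (of Gen.f1 * of Gen.r2)⁻¹,
    (of Gen.f1 * of Gen.f2) ^ 2 * (of Gen.z)⁻¹,
    of Gen.z ^ 2 }

/-- The double cover `W̃(m1, m2)` of `D_{2m1} × D_{2m2}`, as a presented group. -/
abbrev Wt (m1 m2 : ℕ) := PresentedGroup (rels m1 m2)

def wz (m1 m2 : ℕ) : Wt m1 m2 := PresentedGroup.of Gen.z
def wr1 (m1 m2 : ℕ) : Wt m1 m2 := PresentedGroup.of Gen.r1
def wf1 (m1 m2 : ℕ) : Wt m1 m2 := PresentedGroup.of Gen.f1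
def wr2 (m1 m2 : ℕ) : Wt m1 m2 := PresentedGroup.of Gen.r2
def wf2 (m1 m2 : ℕ) : Wt m1 m2 := PresentedGroup.of Gen.f2

/-- `ζ m = exp(i π / m)`. -/
noncomputable def ζ (m : ℕ) : ℂ := Complex.exp (Real.pi * Complex.I / m)

/-- The matrix by which `f1` acts in `U(ℓ1,ℓ2)`. -/
def F1 : Matrix (Fin 4) (Fin 4) ℂ :=
  !![0, 1, 0, 0; 1, 0, 0, 0; 0, 0, 0, 1; 0, 0, 1, 0]

/-- The matrix by which `f2` acts in `U(ℓ1,ℓ2)`. -/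
def F2 : Matrix (Fin 4) (Fin 4) ℂ :=
  !![0, 0, 1, 0; 0, 0, 0, -1; 1, 0, 0, 0; 0, -1, 0, 0]

/-- The matrix `diag(ζ1^{ℓ1}, ζ1^{-ℓ1}, ζ1^{ℓ1}, ζ1^{-ℓ1})` by which `r1` acts. -/
noncomputable def R1 (m1 : ℕ) (ℓ1 : ℤ) : Matrix (Fin 4) (Fin 4) ℂ :=
  Matrix.diagonal ![ζ m1 ^ ℓ1, ζ m1 ^ (-ℓ1), ζ m1 ^ ℓ1, ζ m1 ^ (-ℓ1)]

/-- The matrix `diag(ζ2^{ℓ2}, ζ2^{ℓ2}, ζ2^{-ℓ2}, ζ2^{-ℓ2})` by which `r2` acts. -/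
noncomputable def R2 (m2 : ℕ) (ℓ2 : ℤ) : Matrix (Fin 4) (Fin 4) ℂ :=
  Matrix.diagonal ![ζ m2 ^ ℓ2, ζ m2 ^ ℓ2, ζ m2 ^ (-ℓ2), ζ m2 ^ (-ℓ2)]

/-- `ρ` is the representation `U(ℓ1,ℓ2)` of `W̃(m1,m2)`: the generators act by the
prescribed matrices (and `z` by `-Id`). -/
def IsU4 (m1 m2 : ℕ) (ℓ1 ℓ2 : ℤ) (ρ : Wt m1 m2 →* GL (Fin 4) ℂ) : Prop :=
  (ρ (wf1 m1 m2) : Matrix (Fin 4) (Fin 4) ℂ) = F1 ∧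
  (ρ (wf2 m1 m2) : Matrix (Fin 4) (Fin 4) ℂ) = F2 ∧
  (ρ (wr1 m1 m2) : Matrix (Fin 4) (Fin 4) ℂ) = R1 m1 ℓ1 ∧
  (ρ (wr2 m1 m2) : Matrix (Fin 4) (Fin 4) ℂ) = R2 m2 ℓ2 ∧
  (ρ (wz m1 m2) : Matrix (Fin 4) (Fin 4) ℂ) = -1

/-- Irreducibility of a matrix representation: the only invariant subspaces of `ℂ⁴`
are `0` and `ℂ⁴`. -/
def Irreducible4 {m1 m2 : ℕ} (ρ : Wt m1 m2 →* GL (Fin 4) ℂ) : Prop :=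
  ∀ p : Submodule ℂ (Fin 4 → ℂ),
    (∀ w : Wt m1 m2, ∀ v ∈ p, Matrix.mulVec (ρ w : Matrix (Fin 4) (Fin 4) ℂ) v ∈ p) →
    p = ⊥ ∨ p = ⊤

/-- Two matrix representations of `W̃(m1,m2)` on `ℂ⁴` are isomorphic: there is an
invertible intertwining linear map `ℂ⁴ → ℂ⁴`. -/
def Equiv4 {m1 m2 : ℕ} (ρ ρ' : Wt m1 m2 →* GL (Fin 4) ℂ) : Prop :=
  ∃ T : (Fin 4 → ℂ) ≃ₗ[ℂ] (Fin 4 → ℂ), ∀ (w : Wt m1 m2) (v : Fin 4 → ℂ),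
    T (Matrix.mulVec (ρ w : Matrix (Fin 4) (Fin 4) ℂ) v)
      = Matrix.mulVec (ρ' w : Matrix (Fin 4) (Fin 4) ℂ) (T v)

end Stmt5

namespace Submodule

variable {K A : Type*} [Field K] [Ring A] [Algebra K A]

def mulStabilizer (p : Submodule K A) : Subalgebra K A where
  carrier := {g | ∀ v ∈ p, g * v ∈ p}
  mul_mem' {g h} hg hh v hv := by rw [mul_assoc]; exact hg _ (hh v hv)
  add_mem' {g h} hg hh v hv := by rw [add_mul]; exact p.add_mem (hg v hv) (hh v hv)
  algebraMap_mem' c v hv := by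
    rw [Algebra.algebraMap_eq_smul_one, smul_mul_assoc, one_mul]
    exact p.smul_mem c hv

end Submodule

section Separating

variable {ι K : Type*} [Fintype ι] [DecidableEq ι] [Field K]

theorem Subalgebra.single_one_mem_of_separating {S : Subalgebra K (ι → K)}
    (hS : ∀ i j, i ≠ j → ∃ d ∈ S, d i ≠ d j) (i : ι) : Pi.single i 1 ∈ S := by
  have factor : ∀ j, ∃ h ∈ S, h i = 1 ∧ (j ≠ i → h j = 0) := by
    intro j
    by_cases hji : j = i
    · exact ⟨1, S.one_mem, rfl, fun h => absurd hji h⟩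
    obtain ⟨d, hdS, hd⟩ := hS i j (Ne.symm hji)
    refine ⟨(d i - d j)⁻¹ • (d - algebraMap K _ (d j)),
      S.smul_mem (S.sub_mem hdS (S.algebraMap_mem _)) _, ?_, fun _ => ?_⟩
    · simp [inv_mul_cancel₀ (sub_ne_zero.mpr hd)]
    · simp
  choose h h_mem h_one h_zero using factor
  convert S.prod_mem (fun j _ => h_mem j) (t := Finset.univ)
  ext k
  rw [Finset.prod_apply]
  by_cases hk : k = i
  · subst hk; simp [h_one]
  · exact (Pi.single_eq_of_ne hk _).trans
      (Finset.prod_eq_zero (f := fun j => h j k) (Finset.mem_univ k) (h_zero k hk)).symm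

theorem Submodule.single_mem_of_separating {p : Submodule K (ι → K)} {D : Set (ι → K)}
    (hp : ∀ d ∈ D, ∀ v ∈ p, d * v ∈ p) (hD : ∀ i j, i ≠ j → ∃ d ∈ D, d i ≠ d j)
    {v : ι → K} (hv : v ∈ p) (i : ι) : Pi.single i (v i) ∈ p := by
  have := Subalgebra.single_one_mem_of_separating
    (S := p.mulStabilizer) (fun i j hij => (hD i j hij).imp fun d hd => ⟨hp d hd.1, hd.2⟩) i
  simpa [← Pi.single_mul_left] using this v hv

end Separating

namespace Stmt5

theorem zeta_ne_zero (m : ℕ) : ζ m ≠ 0 :=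
  Complex.exp_ne_zero _

theorem zeta_zpow_ne_zero (m : ℕ) (ℓ : ℤ) : ζ m ^ ℓ ≠ 0 :=
  zpow_ne_zero ℓ (zeta_ne_zero m)

theorem zeta_pow_self {m : ℕ} (hm : m ≠ 0) : ζ m ^ m = -1 := by
  rw [ζ, ← Complex.exp_nat_mul, mul_div_cancel₀ _ (Nat.cast_ne_zero.mpr hm), Complex.exp_pi_mul_I]

theorem zeta_zpow_pow_self {m : ℕ} (hm : m ≠ 0) {ℓ : ℤ} (hℓ : Odd ℓ) : (ζ m ^ ℓ) ^ m = -1 := by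
  rw [← zpow_natCast, zpow_comm, zpow_natCast, zeta_pow_self hm, hℓ.neg_one_zpow]

theorem isPrimitiveRoot_zeta_sq {m : ℕ} (hm : m ≠ 0) : IsPrimitiveRoot (ζ m ^ 2) m := by
  convert Complex.isPrimitiveRoot_exp m hm using 1
  rw [ζ, ← Complex.exp_nat_mul]
  ring_nf

theorem zeta_zpow_ne_inv {m : ℕ} {ℓ : ℤ} (h0 : 0 < ℓ) (hm : ℓ < m) :
    ζ m ^ ℓ ≠ (ζ m ^ ℓ)⁻¹ := by
  rw [← zpow_neg]
  intro h
  have hm0 : m ≠ 0 := by omega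
  have hsq : (ζ m ^ 2) ^ ℓ = 1 := by
    rw [← zpow_natCast, zpow_comm, zpow_natCast, sq]
    nth_rw 2 [h]
    rw [← zpow_add₀ (zeta_ne_zero m), add_neg_cancel, zpow_zero]
  have hdvd := ((isPrimitiveRoot_zeta_sq hm0).zpow_eq_one_iff_dvd ℓ).mp hsq
  have := Int.le_of_dvd h0 hdvd
  omega

open Matrix

theorem F1_mul_self : F1 * F1 = 1 := by
  ext i j; fin_cases i <;> fin_cases j <;> simp [F1, mul_apply, Fin.sum_univ_four, one_apply]

theorem F2_mul_self : F2 * F2 = 1 := by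
  ext i j; fin_cases i <;> fin_cases j <;> simp [F2, mul_apply, Fin.sum_univ_four, one_apply]

theorem F1_mul_F2_sq : (F1 * F2) ^ 2 = -1 := by
  ext i j
  fin_cases i <;> fin_cases j <;> simp [sq, F1, F2, mul_apply, Fin.sum_univ_four, one_apply]

theorem R1_mul_R1_neg (m : ℕ) (ℓ : ℤ) : R1 m ℓ * R1 m (-ℓ) = 1 := by
  ext i j; fin_cases i <;> fin_cases j <;> simp [R1, zeta_zpow_ne_zero]

theorem R2_mul_R2_neg (m : ℕ) (ℓ : ℤ) : R2 m ℓ * R2 m (-ℓ) = 1 := by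
  ext i j; fin_cases i <;> fin_cases j <;> simp [R2, zeta_zpow_ne_zero]

theorem R1_mul_F1_sq (m : ℕ) (ℓ : ℤ) : (R1 m ℓ * F1) ^ 2 = 1 := by
  ext i j
  fin_cases i <;> fin_cases j <;>
    simp [sq, R1, F1, mul_apply, Fin.sum_univ_four, zeta_zpow_ne_zero]

theorem R2_mul_F2_sq (m : ℕ) (ℓ : ℤ) : (R2 m ℓ * F2) ^ 2 = 1 := by
  ext i j
  fin_cases i <;> fin_cases j <;>
    simp [sq, R2, F2, mul_apply, Fin.sum_univ_four, zeta_zpow_ne_zero]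

theorem R1_commute_R2 (m1 m2 : ℕ) (ℓ1 ℓ2 : ℤ) : Commute (R1 m1 ℓ1) (R2 m2 ℓ2) := by
  ext i j; fin_cases i <;> fin_cases j <;> simp [R1, R2, mul_comm]

theorem R1_commute_F2 (m : ℕ) (ℓ : ℤ) : Commute (R1 m ℓ) F2 := by
  ext i j; fin_cases i <;> fin_cases j <;> simp [R1, F2, mul_apply, Fin.sum_univ_four]

theorem R2_commute_F1 (m : ℕ) (ℓ : ℤ) : Commute (R2 m ℓ) F1 := by
  ext i j; fin_cases i <;> fin_cases j <;> simp [R2, F1, mul_apply, Fin.sum_univ_four]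

theorem R1_pow_self {m : ℕ} (hm : m ≠ 0) {ℓ : ℤ} (hℓ : Odd ℓ) : R1 m ℓ ^ m = -1 := by
  ext i j; fin_cases i <;> fin_cases j <;> simp [R1, diagonal_pow, zeta_zpow_pow_self hm hℓ]

theorem R2_pow_self {m : ℕ} (hm : m ≠ 0) {ℓ : ℤ} (hℓ : Odd ℓ) : R2 m ℓ ^ m = -1 := by
  ext i j; fin_cases i <;> fin_cases j <;> simp [R2, diagonal_pow, zeta_zpow_pow_self hm hℓ]

noncomputable def U4gen (m1 m2 : ℕ) (ℓ1 ℓ2 : ℤ) : Gen → GL (Fin 4) ℂ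
  | .z => -1
  | .r1 => ⟨R1 m1 ℓ1, R1 m1 (-ℓ1), R1_mul_R1_neg m1 ℓ1, by simpa using R1_mul_R1_neg m1 (-ℓ1)⟩
  | .f1 => ⟨F1, F1, F1_mul_self, F1_mul_self⟩
  | .r2 => ⟨R2 m2 ℓ2, R2 m2 (-ℓ2), R2_mul_R2_neg m2 ℓ2, by simpa using R2_mul_R2_neg m2 (-ℓ2)⟩
  | .f2 => ⟨F2, F2, F2_mul_self, F2_mul_self⟩

theorem lift_U4gen_of_mem_rels {m1 m2 : ℕ} (hm1 : m1 ≠ 0) (hm2 : m2 ≠ 0) {ℓ1 ℓ2 : ℤ}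
    (hℓ1 : Odd ℓ1) (hℓ2 : Odd ℓ2) : ∀ r ∈ rels m1 m2, FreeGroup.lift (U4gen m1 m2 ℓ1 ℓ2) r = 1 := by
  intro r hr
  simp only [rels, Set.mem_insert_iff, Set.mem_singleton_iff] at hr
  rcases hr with rfl | rfl | rfl | rfl | rfl | rfl | rfl | rfl | rfl | rfl | rfl <;>
    simp only [map_mul, map_pow, map_inv, FreeGroup.lift_apply_of, mul_inv_eq_one] <;>
    ext1 <;>
    simp [U4gen, R1_pow_self hm1 hℓ1, R2_pow_self hm2 hℓ2, sq F1, F1_mul_self, sq F2, F2_mul_self,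
      R1_mul_F1_sq, R2_mul_F2_sq, (R1_commute_R2 ..).eq, (R1_commute_F2 ..).eq,
      (R2_commute_F1 ..).eq, F1_mul_F2_sq]

theorem F1_mulVec_single (i : Fin 4) : F1 *ᵥ Pi.single i 1 = Pi.single (![1, 0, 3, 2] i) 1 := by
  ext k; fin_cases i <;> fin_cases k <;> simp [F1]

theorem F2_mulVec_single (i : Fin 4) :
    F2 *ᵥ Pi.single i 1 = ![(1 : ℂ), -1, 1, -1] i • Pi.single (![2, 3, 0, 1] i) 1 := by
  ext k; fin_cases i <;> fin_cases k <;> simp [F2]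

theorem single_mem_of_mulVec_F_mem {p : Submodule ℂ (Fin 4 → ℂ)}
    (hF1 : ∀ v ∈ p, F1 *ᵥ v ∈ p) (hF2 : ∀ v ∈ p, F2 *ᵥ v ∈ p) {i : Fin 4}
    (hi : Pi.single i 1 ∈ p) (j : Fin 4) (c : ℂ) : Pi.single j c ∈ p := by
  have move_F1 (k : Fin 4) (hk : Pi.single k 1 ∈ p) : Pi.single (![1, 0, 3, 2] k) (1 : ℂ) ∈ p :=
    F1_mulVec_single k ▸ hF1 _ hk
  have move_F2 (k : Fin 4) (hk : Pi.single k 1 ∈ p) : Pi.single (![2, 3, 0, 1] k) (1 : ℂ) ∈ p := by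
    have hsign : (![1, -1, 1, -1] k : ℂ) ≠ 0 := by fin_cases k <;> norm_num
    have hk' := hF2 _ hk
    rw [F2_mulVec_single] at hk'
    exact (p.smul_mem_iff hsign).mp hk'
  have reach : j = i ∨ j = ![1, 0, 3, 2] i ∨ j = ![2, 3, 0, 1] i ∨
      j = ![1, 0, 3, 2] (![2, 3, 0, 1] i) := by
    fin_cases i <;> fin_cases j <;> simp
  have hj : Pi.single j (1 : ℂ) ∈ p := by
    rcases reach with rfl | rfl | rfl | rfl
    exacts [hi, move_F1 _ hi, move_F2 _ hi, move_F1 _ (move_F2 _ hi)]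
  simpa [← Pi.single_smul'] using p.smul_mem c hj

theorem single_mem_of_mulVec_R_mem {m1 m2 : ℕ} {ℓ1 ℓ2 : ℤ} (h1 : ζ m1 ^ ℓ1 ≠ (ζ m1 ^ ℓ1)⁻¹)
    (h2 : ζ m2 ^ ℓ2 ≠ (ζ m2 ^ ℓ2)⁻¹) {p : Submodule ℂ (Fin 4 → ℂ)}
    (hR1 : ∀ v ∈ p, R1 m1 ℓ1 *ᵥ v ∈ p) (hR2 : ∀ v ∈ p, R2 m2 ℓ2 *ᵥ v ∈ p)
    {v : Fin 4 → ℂ} (hv : v ∈ p) (i : Fin 4) : Pi.single i (v i) ∈ p := by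
  have hmul (d v : Fin 4 → ℂ) : diagonal d *ᵥ v = d * v := funext (mulVec_diagonal d v)
  refine Submodule.single_mem_of_separating
    (D := {![ζ m1 ^ ℓ1, ζ m1 ^ (-ℓ1), ζ m1 ^ ℓ1, ζ m1 ^ (-ℓ1)],
      ![ζ m2 ^ ℓ2, ζ m2 ^ ℓ2, ζ m2 ^ (-ℓ2), ζ m2 ^ (-ℓ2)]}) ?_ ?_ hv i
  · rintro d (rfl | rfl) w hw
    · simpa only [R1, hmul] using hR1 w hw
    · simpa only [R2, hmul] using hR2 w hw
  · intro j k hjk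
    fin_cases j <;> fin_cases k <;> simp [h1, h1.symm, h2, h2.symm] at hjk ⊢

theorem irreducible4_of_isU4 {m1 m2 : ℕ} {ℓ1 ℓ2 : ℤ} {ρ : Wt m1 m2 →* GL (Fin 4) ℂ}
    (hρ : IsU4 m1 m2 ℓ1 ℓ2 ρ) (hℓ1 : 0 < ℓ1) (hℓ1m : ℓ1 < m1) (hℓ2 : 0 < ℓ2) (hℓ2m : ℓ2 < m2) :
    Irreducible4 ρ := by
  obtain ⟨hf1, hf2, hr1, hr2, -⟩ := hρ
  intro p hp
  have hinv {M : Matrix (Fin 4) (Fin 4) ℂ} {w : Wt m1 m2} (hw : (ρ w : Matrix _ _ ℂ) = M) :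
      ∀ v ∈ p, M *ᵥ v ∈ p := hw ▸ hp w
  refine or_iff_not_imp_left.mpr fun hbot => ?_
  obtain ⟨v, hv, hv0⟩ := (Submodule.ne_bot_iff p).mp hbot
  obtain ⟨i, hi⟩ := Function.ne_iff.mp hv0
  have hi1 : Pi.single i 1 ∈ p := by
    refine (p.smul_mem_iff hi).mp ?_
    simpa [← Pi.single_smul'] using single_mem_of_mulVec_R_mem (zeta_zpow_ne_inv hℓ1 hℓ1m)
      (zeta_zpow_ne_inv hℓ2 hℓ2m) (hinv hr1) (hinv hr2) hv i
  refine Submodule.eq_top_iff'.mpr fun x => ?_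
  simpa only [LinearMap.sum_single_apply] using p.sum_mem (t := Finset.univ) fun j _ =>
    single_mem_of_mulVec_F_mem (hinv hf1) (hinv hf2) hi1 j (x j)

noncomputable def U4 {m1 m2 : ℕ} (hm1 : m1 ≠ 0) (hm2 : m2 ≠ 0) {ℓ1 ℓ2 : ℤ} (hℓ1 : Odd ℓ1)
    (hℓ2 : Odd ℓ2) : Wt m1 m2 →* GL (Fin 4) ℂ :=
  PresentedGroup.toGroup (lift_U4gen_of_mem_rels hm1 hm2 hℓ1 hℓ2)

theorem isU4_U4 {m1 m2 : ℕ} (hm1 : m1 ≠ 0) (hm2 : m2 ≠ 0) {ℓ1 ℓ2 : ℤ} (hℓ1 : Odd ℓ1)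
    (hℓ2 : Odd ℓ2) : IsU4 m1 m2 ℓ1 ℓ2 (U4 hm1 hm2 hℓ1 hℓ2) := by
  refine ⟨?_, ?_, ?_, ?_, ?_⟩ <;>
    simp [U4, wf1, wf2, wr1, wr2, wz, PresentedGroup.toGroup.of, U4gen]

/-- For odd integers `ℓ1, ℓ2`, the matrix assignments of `U(ℓ1,ℓ2)` respect the defining
relations of `W̃(m1,m2)` and hence define a representation `W̃(m1,m2) → GL(ℂ⁴)` in which
`z` acts as `-Id`; moreover if `0 < ℓ1 < m1` and `0 < ℓ2 < m2` this representation is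
irreducible. -/
theorem U4_exists_and_irreducible (m1 m2 : ℕ) (h1 : 1 ≤ m1) (h2 : 1 ≤ m2)
    (ℓ1 ℓ2 : ℤ) (hodd1 : Odd ℓ1) (hodd2 : Odd ℓ2) :
    ∃ ρ : Wt m1 m2 →* GL (Fin 4) ℂ, IsU4 m1 m2 ℓ1 ℓ2 ρ ∧
      ((0 < ℓ1 ∧ ℓ1 < m1 ∧ 0 < ℓ2 ∧ ℓ2 < m2) → Irreducible4 ρ) := by
  have hU := isU4_U4 (Nat.one_le_iff_ne_zero.mp h1) (Nat.one_le_iff_ne_zero.mp h2) hodd1 hodd2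
  exact ⟨_, hU, fun ⟨hℓ1, hℓ1m, hℓ2, hℓ2m⟩ => irreducible4_of_isU4 hU hℓ1 hℓ1m hℓ2 hℓ2m⟩

end Stmt5
end

section
/- Let W̃ = W̃(m1,m2) with m2 odd, and let ℓ1 be an odd integer with 0 < ℓ1 < 2m1. The assignments f1 ↦ [[0,1],[1,0]], f2 ↦ diag(1,−1), r1 ↦ diag(ζ1^{ℓ1}, ζ1^{−ℓ1}), r2 ↦ −Id₂, z ↦ −Id₂ respect all defining relations of W̃ and hence define a 2-dimensional representation U(ℓ1, m2) : W̃ → GL(ℂ²) on which z acts as −Id; moreover this representation is irreducible. -/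
/-!
With `a = ζ1 ^ ℓ1` we have `a ^ m1 = (-1) ^ ℓ1 = -1` since `ℓ1` is odd, and `(-1) ^ m2 = -1`
since `m2` is odd; given these, every defining relation of `W̃` becomes a `2 × 2` matrix identity.
For irreducibility, `(1 + f2) / 2` maps an invariant subspace into the first coordinate axis and
`f1` swaps the two axes, so a nonzero invariant subspace contains both basis vectors.
-/

namespace Stmt9

/-- Generators of the double cover `W̃(m1, m2)`. -/
inductive Gen | z | r1 | f1 | r2 | f2

open FreeGroup in
/-- Defining relations of `W̃(m1, m2)`:
`r1^{m1} = z`, `r2^{m2} = z`, `f1^2 = 1`, `f2^2 = 1`, `(r1 f1)^2 = 1`, `(r2 f2)^2 = 1`,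
`r1 r2 = r2 r1`, `r1 f2 = f2 r1`, `r2 f1 = f1 r2`, `(f1 f2)^2 = z`, `z^2 = 1`. -/
def rels (m1 m2 : ℕ) : Set (FreeGroup Gen) :=
  { of Gen.r1 ^ m1 * (of Gen.z)⁻¹,
    of Gen.r2 ^ m2 * (of Gen.z)⁻¹,
    of Gen.f1 ^ 2,
    of Gen.f2 ^ 2,
    (of Gen.r1 * of Gen.f1) ^ 2,
    (of Gen.r2 * of Gen.f2) ^ 2,
    of Gen.r1 * of Gen.r2 * (of Gen.r2 * of Gen.r1)⁻¹,
    of Gen.r1 * of Gen.f2 * (of Gen.f2 * of Gen.r1)⁻¹,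
    of Gen.r2 * of Gen.f1 * (of Gen.f1 * of Gen.r2)⁻¹,
    (of Gen.f1 * of Gen.f2) ^ 2 * (of Gen.z)⁻¹,
    of Gen.z ^ 2 }

/-- The double cover `W̃(m1, m2)` of `D_{2m1} × D_{2m2}`, as a presented group. -/
abbrev Wt (m1 m2 : ℕ) := PresentedGroup (rels m1 m2)

def wz (m1 m2 : ℕ) : Wt m1 m2 := PresentedGroup.of Gen.z
def wr1 (m1 m2 : ℕ) : Wt m1 m2 := PresentedGroup.of Gen.r1
def wf1 (m1 m2 : ℕ) : Wt m1 m2 := PresentedGroup.of Gen.f1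
def wr2 (m1 m2 : ℕ) : Wt m1 m2 := PresentedGroup.of Gen.r2
def wf2 (m1 m2 : ℕ) : Wt m1 m2 := PresentedGroup.of Gen.f2

/-- `ζ m = exp(i π / m)`. -/
noncomputable def ζ (m : ℕ) : ℂ := Complex.exp (Real.pi * Complex.I / m)

/-- Irreducibility of a 2-dimensional matrix representation of `W̃(m1,m2)`. -/
def Irreducible2 {m1 m2 : ℕ} (ρ : Wt m1 m2 →* GL (Fin 2) ℂ) : Prop :=
  ∀ p : Submodule ℂ (Fin 2 → ℂ),
    (∀ w : Wt m1 m2, ∀ v ∈ p, Matrix.mulVec (ρ w : Matrix (Fin 2) (Fin 2) ℂ) v ∈ p) →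
    p = ⊥ ∨ p = ⊤

theorem ζ_pow_self {m : ℕ} (hm : m ≠ 0) : ζ m ^ m = -1 := by
  rw [ζ, ← Complex.exp_nat_mul, mul_div_cancel₀ _ (Nat.cast_ne_zero.2 hm),
    Complex.exp_pi_mul_I]

theorem zpow_pow_eq_neg_one_of_odd {α : Type*} [DivisionRing α] {a : α} {m : ℕ}
    (h : a ^ m = -1) {ℓ : ℤ} (hℓ : Odd ℓ) : (a ^ ℓ) ^ m = -1 := by
  rw [← zpow_natCast, ← zpow_mul, mul_comm, zpow_mul, zpow_natCast, h, hℓ.neg_one_zpow]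

section

open Matrix GeneralLinearGroup

variable {K : Type*} [Field K]

theorem eq_bot_or_eq_top_of_swap_of_signFlip [NeZero (2 : K)]
    (p : Submodule K (Fin 2 → K)) (hswap : ∀ v ∈ p, !![0, 1; 1, 0] *ᵥ v ∈ p)
    (hflip : ∀ v ∈ p, !![1, 0; 0, -1] *ᵥ v ∈ p) : p = ⊥ ∨ p = ⊤ := by
  have hswap' : ∀ v ∈ p, ![v 1, v 0] ∈ p := fun v hv => by
    simpa [cons_mulVec, vecHead, vecTail] using hswap v hv
  have hproj : ∀ v ∈ p, ![v 0, 0] ∈ p := fun v hv => by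
    convert p.smul_mem (2⁻¹ : K) (p.add_mem hv (hflip v hv)) using 1
    ext i; fin_cases i <;> simp [cons_mulVec, vecHead, vecTail, ← two_mul, two_ne_zero]
  refine or_iff_not_imp_left.2 fun hne => ?_
  obtain ⟨v, hv, hv0⟩ := p.ne_bot_iff.1 hne
  obtain ⟨c, hc, hcp⟩ : ∃ c ≠ 0, ![c, 0] ∈ p := by
    by_cases h0 : v 0 = 0
    · refine ⟨v 1, fun h1 => hv0 ?_, by simpa using hproj _ (hswap' v hv)⟩
      ext i; fin_cases i <;> simp [h0, h1]
    · exact ⟨v 0, h0, hproj v hv⟩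
  have hcp' : ![0, c] ∈ p := by simpa using hswap' _ hcp
  refine eq_top_iff.2 fun x _ => ?_
  convert p.add_mem (p.smul_mem (x 0 / c) hcp) (p.smul_mem (x 1 / c) hcp') using 1
  ext i; fin_cases i <;> simp [hc]

def swapGL : GL (Fin 2) K := mkOfDetNeZero !![0, 1; 1, 0] (by simp [det_fin_two_of])

def signFlipGL : GL (Fin 2) K := mkOfDetNeZero !![1, 0; 0, -1] (by simp [det_fin_two_of])

def diagGL (a : K) (ha : a ≠ 0) : GL (Fin 2) K :=
  mkOfDetNeZero (diagonal ![a, a⁻¹]) (by simp [ha])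

def genImage (a : K) (ha : a ≠ 0) : Gen → GL (Fin 2) K
  | .z => -1
  | .r1 => diagGL a ha
  | .f1 => swapGL
  | .r2 => -1
  | .f2 => signFlipGL

theorem lift_genImage_rels {m1 m2 : ℕ} {a : K} (ha : a ≠ 0) (hpow : a ^ m1 = -1)
    (hm2 : Odd m2) : ∀ r ∈ rels m1 m2, FreeGroup.lift (genImage a ha) r = 1 := by
  intro r hr
  simp only [rels, Set.mem_insert_iff, Set.mem_singleton_iff] at hr
  rcases hr with rfl | rfl | rfl | rfl | rfl | rfl | rfl | rfl | rfl | rfl | rfl <;>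
    simp only [map_mul, map_pow, map_inv, FreeGroup.lift_apply_of, genImage, mul_inv_eq_one,
      Units.ext_iff, Units.val_mul, Units.val_pow_eq_pow_val, Units.val_neg, Units.val_one,
      swapGL, signFlipGL, diagGL, val_mkOfDetNeZero, hm2.neg_one_pow, diagonal_pow] <;>
    simp [sq, one_fin_two, diagonal_fin_two, ha, hpow]

variable {m1 m2 : ℕ} {a : K} (ha : a ≠ 0) (hpow : a ^ m1 = -1) (hm2 : Odd m2)

/-- The paper's `U(ℓ1, m2)` is `repU` at `a = ζ1 ^ ℓ1`. -/
def repU : Wt m1 m2 →* GL (Fin 2) K := PresentedGroup.toGroup (lift_genImage_rels ha hpow hm2)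

@[simp]
theorem repU_of (g : Gen) : repU ha hpow hm2 (PresentedGroup.of g) = genImage a ha g :=
  PresentedGroup.toGroup.of _

end

theorem irreducible2_repU {m1 m2 : ℕ} {a : ℂ} (ha : a ≠ 0) (hpow : a ^ m1 = -1)
    (hm2 : Odd m2) : Irreducible2 (repU ha hpow hm2) := fun p hp =>
  eq_bot_or_eq_top_of_swap_of_signFlip p
    (by simpa [wf1, genImage, swapGL] using hp (wf1 m1 m2))
    (by simpa [wf2, genImage, signFlipGL] using hp (wf2 m1 m2))

theorem U2_second_exists_and_irreducible_general (m1 m2 : ℕ) (h1 : 1 ≤ m1)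
    (hm2 : Odd m2) (ℓ1 : ℤ) (hodd1 : Odd ℓ1) :
    ∃ ρ : Wt m1 m2 →* GL (Fin 2) ℂ,
      (ρ (wf1 m1 m2) : Matrix (Fin 2) (Fin 2) ℂ) = !![0, 1; 1, 0] ∧
      (ρ (wf2 m1 m2) : Matrix (Fin 2) (Fin 2) ℂ) = !![1, 0; 0, -1] ∧
      (ρ (wr1 m1 m2) : Matrix (Fin 2) (Fin 2) ℂ)
        = Matrix.diagonal ![ζ m1 ^ ℓ1, ζ m1 ^ (-ℓ1)] ∧
      (ρ (wr2 m1 m2) : Matrix (Fin 2) (Fin 2) ℂ) = -1 ∧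
      (ρ (wz m1 m2) : Matrix (Fin 2) (Fin 2) ℂ) = -1 ∧
      Irreducible2 ρ := by
  have ha : ζ m1 ^ ℓ1 ≠ 0 := zpow_ne_zero _ (Complex.exp_ne_zero _)
  have hpow := zpow_pow_eq_neg_one_of_odd (ζ_pow_self (by omega : m1 ≠ 0)) hodd1
  refine ⟨repU ha hpow hm2, ?_, ?_, ?_, ?_, ?_, irreducible2_repU ha hpow hm2⟩ <;>
    simp [wf1, wf2, wr1, wr2, wz, genImage, swapGL, signFlipGL, diagGL, zpow_neg]

/-- For `m2` odd and `ℓ1` odd with `0 < ℓ1 < 2 m1`, the assignments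
`f1 ↦ [[0,1],[1,0]]`, `f2 ↦ diag(1,−1)`, `r1 ↦ diag(ζ1^{ℓ1}, ζ1^{−ℓ1})`, `r2 ↦ −Id`,
`z ↦ −Id` respect the defining relations of `W̃(m1,m2)` and define a 2-dimensional
representation `U(ℓ1, m2)` on which `z` acts as `−Id`; moreover it is irreducible. -/
theorem U2_second_exists_and_irreducible (m1 m2 : ℕ) (h1 : 1 ≤ m1) (h2 : 1 ≤ m2)
    (hm2 : Odd m2) (ℓ1 : ℤ) (hodd1 : Odd ℓ1) (hr1 : 0 < ℓ1) (hr1m : ℓ1 < 2 * m1) :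
    ∃ ρ : Wt m1 m2 →* GL (Fin 2) ℂ,
      (ρ (wf1 m1 m2) : Matrix (Fin 2) (Fin 2) ℂ) = !![0, 1; 1, 0] ∧
      (ρ (wf2 m1 m2) : Matrix (Fin 2) (Fin 2) ℂ) = !![1, 0; 0, -1] ∧
      (ρ (wr1 m1 m2) : Matrix (Fin 2) (Fin 2) ℂ)
        = Matrix.diagonal ![ζ m1 ^ ℓ1, ζ m1 ^ (-ℓ1)] ∧
      (ρ (wr2 m1 m2) : Matrix (Fin 2) (Fin 2) ℂ) = -1 ∧
      (ρ (wz m1 m2) : Matrix (Fin 2) (Fin 2) ℂ) = -1 ∧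
      Irreducible2 ρ :=
  U2_second_exists_and_irreducible_general m1 m2 h1 hm2 ℓ1 hodd1

end Stmt9
end

section
/- Let W̃ = W̃(m1,m2). Every finite-dimensional irreducible complex representation of W̃ on which z acts as −Id is isomorphic to one of the following: (i) a 4-dimensional representation U(ℓ1,ℓ2) with ℓ1, ℓ2 odd, 0 < ℓ1 < m1, 0 < ℓ2 < m2; (ii) if m1 is odd, a 2-dimensional representation U(m1,ℓ2) with ℓ2 odd, 0 < ℓ2 < 2m2; (iii) if m2 is odd, a 2-dimensional representation U(ℓ1,m2) with ℓ1 odd, 0 < ℓ1 < 2m1. -/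
/-!
The operators of `r1` and `r2` commute, so they have a common eigenvector `v`. As `r1^{m1}`,
`r2^{m2}` act by `z = -1`, the eigenvalues are odd powers `ζ1^{ℓ1}`, `ζ2^{ℓ2}`; and as `f1` inverts
`r1` and commutes with `r2` (symmetrically for `f2`), replacing `v` by `f1 v` or `f2 v` achieves
`ℓ1 ≤ m1` and `ℓ2 ≤ m2`.

If both inequalities are strict, `v, f1 v, f2 v, f1 f2 v` carry four distinct pairs of
`(r1, r2)`-eigenvalues, so they are independent; their span is invariant, hence everything, and in
this basis the generators act by the matrices of `U(ℓ1,ℓ2)`. If `ℓ1 = m1`, the `(-1)`-eigenspace of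
`r1` is invariant, so `r1` acts by `-1`; a vector `u` fixed by `f1` that is an eigenvector of `r2`
then yields the basis `u, f2 u` of `U(m1,ℓ2)`. The case `ℓ2 = m2` is symmetric.

The matrix representation is obtained by transporting `ρ` along the basis, so the relations of the
presentation never have to be checked on the matrices.
-/

namespace Stmt10

/-- Generators of the double cover `W̃(m1, m2)`. -/
inductive Gen | z | r1 | f1 | r2 | f2

open FreeGroup in
/-- Defining relations of `W̃(m1, m2)`:
`r1^{m1} = z`, `r2^{m2} = z`, `f1^2 = 1`, `f2^2 = 1`, `(r1 f1)^2 = 1`, `(r2 f2)^2 = 1`,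
`r1 r2 = r2 r1`, `r1 f2 = f2 r1`, `r2 f1 = f1 r2`, `(f1 f2)^2 = z`, `z^2 = 1`. -/
def rels (m1 m2 : ℕ) : Set (FreeGroup Gen) :=
  { of Gen.r1 ^ m1 * (of Gen.z)⁻¹,
    of Gen.r2 ^ m2 * (of Gen.z)⁻¹,
    of Gen.f1 ^ 2,
    of Gen.f2 ^ 2,
    (of Gen.r1 * of Gen.f1) ^ 2,
    (of Gen.r2 * of Gen.f2) ^ 2,
    of Gen.r1 * of Gen.r2 * (of Gen.r2 * of Gen.r1)⁻¹,
    of Gen.r1 * of Gen.f2 * (of Gen.f2 * of Gen.r1)⁻¹,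
    of Gen.r2 * of Gen.f1 * (of Gen.f1 * of Gen.r2)⁻¹,
    (of Gen.f1 * of Gen.f2) ^ 2 * (of Gen.z)⁻¹,
    of Gen.z ^ 2 }

/-- The double cover `W̃(m1, m2)` of `D_{2m1} × D_{2m2}`, as a presented group. -/
abbrev Wt (m1 m2 : ℕ) := PresentedGroup (rels m1 m2)

def wz (m1 m2 : ℕ) : Wt m1 m2 := PresentedGroup.of Gen.z
def wr1 (m1 m2 : ℕ) : Wt m1 m2 := PresentedGroup.of Gen.r1
def wf1 (m1 m2 : ℕ) : Wt m1 m2 := PresentedGroup.of Gen.f1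
def wr2 (m1 m2 : ℕ) : Wt m1 m2 := PresentedGroup.of Gen.r2
def wf2 (m1 m2 : ℕ) : Wt m1 m2 := PresentedGroup.of Gen.f2

/-- `ζ m = exp(i π / m)`. -/
noncomputable def ζ (m : ℕ) : ℂ := Complex.exp (Real.pi * Complex.I / m)

/-- The matrix by which `f1` acts in `U(ℓ1,ℓ2)`. -/
def F1 : Matrix (Fin 4) (Fin 4) ℂ :=
  !![0, 1, 0, 0; 1, 0, 0, 0; 0, 0, 0, 1; 0, 0, 1, 0]

/-- The matrix by which `f2` acts in `U(ℓ1,ℓ2)`. -/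
def F2 : Matrix (Fin 4) (Fin 4) ℂ :=
  !![0, 0, 1, 0; 0, 0, 0, -1; 1, 0, 0, 0; 0, -1, 0, 0]

/-- The matrix `diag(ζ1^{ℓ1}, ζ1^{-ℓ1}, ζ1^{ℓ1}, ζ1^{-ℓ1})` by which `r1` acts. -/
noncomputable def R1 (m1 : ℕ) (ℓ1 : ℤ) : Matrix (Fin 4) (Fin 4) ℂ :=
  Matrix.diagonal ![ζ m1 ^ ℓ1, ζ m1 ^ (-ℓ1), ζ m1 ^ ℓ1, ζ m1 ^ (-ℓ1)]

/-- The matrix `diag(ζ2^{ℓ2}, ζ2^{ℓ2}, ζ2^{-ℓ2}, ζ2^{-ℓ2})` by which `r2` acts. -/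
noncomputable def R2 (m2 : ℕ) (ℓ2 : ℤ) : Matrix (Fin 4) (Fin 4) ℂ :=
  Matrix.diagonal ![ζ m2 ^ ℓ2, ζ m2 ^ ℓ2, ζ m2 ^ (-ℓ2), ζ m2 ^ (-ℓ2)]

/-- `ρ` is the representation `U(ℓ1,ℓ2)` of `W̃(m1,m2)`: the generators act by the
prescribed matrices (and `z` by `-Id`). -/
def IsU4 (m1 m2 : ℕ) (ℓ1 ℓ2 : ℤ) (ρ : Wt m1 m2 →* GL (Fin 4) ℂ) : Prop :=
  (ρ (wf1 m1 m2) : Matrix (Fin 4) (Fin 4) ℂ) = F1 ∧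
  (ρ (wf2 m1 m2) : Matrix (Fin 4) (Fin 4) ℂ) = F2 ∧
  (ρ (wr1 m1 m2) : Matrix (Fin 4) (Fin 4) ℂ) = R1 m1 ℓ1 ∧
  (ρ (wr2 m1 m2) : Matrix (Fin 4) (Fin 4) ℂ) = R2 m2 ℓ2 ∧
  (ρ (wz m1 m2) : Matrix (Fin 4) (Fin 4) ℂ) = -1

/-- Irreducibility of a matrix representation: the only invariant subspaces of `ℂ⁴`
are `0` and `ℂ⁴`. -/
def Irreducible4 {m1 m2 : ℕ} (ρ : Wt m1 m2 →* GL (Fin 4) ℂ) : Prop :=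
  ∀ p : Submodule ℂ (Fin 4 → ℂ),
    (∀ w : Wt m1 m2, ∀ v ∈ p, Matrix.mulVec (ρ w : Matrix (Fin 4) (Fin 4) ℂ) v ∈ p) →
    p = ⊥ ∨ p = ⊤

/-- Two matrix representations of `W̃(m1,m2)` on `ℂ⁴` are isomorphic: there is an
invertible intertwining linear map `ℂ⁴ → ℂ⁴`. -/
def Equiv4 {m1 m2 : ℕ} (ρ ρ' : Wt m1 m2 →* GL (Fin 4) ℂ) : Prop :=
  ∃ T : (Fin 4 → ℂ) ≃ₗ[ℂ] (Fin 4 → ℂ), ∀ (w : Wt m1 m2) (v : Fin 4 → ℂ),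
    T (Matrix.mulVec (ρ w : Matrix (Fin 4) (Fin 4) ℂ) v)
      = Matrix.mulVec (ρ' w : Matrix (Fin 4) (Fin 4) ℂ) (T v)

/-- The 2-dimensional representation `U(m1, ℓ2)` (for `m1` odd). -/
def IsU2First (m1 m2 : ℕ) (ℓ2 : ℤ) (ρ : Wt m1 m2 →* GL (Fin 2) ℂ) : Prop :=
  (ρ (wf1 m1 m2) : Matrix (Fin 2) (Fin 2) ℂ) = !![1, 0; 0, -1] ∧
  (ρ (wf2 m1 m2) : Matrix (Fin 2) (Fin 2) ℂ) = !![0, 1; 1, 0] ∧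
  (ρ (wr1 m1 m2) : Matrix (Fin 2) (Fin 2) ℂ) = -1 ∧
  (ρ (wr2 m1 m2) : Matrix (Fin 2) (Fin 2) ℂ) = Matrix.diagonal ![ζ m2 ^ ℓ2, ζ m2 ^ (-ℓ2)] ∧
  (ρ (wz m1 m2) : Matrix (Fin 2) (Fin 2) ℂ) = -1

/-- The 2-dimensional representation `U(ℓ1, m2)` (for `m2` odd). -/
def IsU2Second (m1 m2 : ℕ) (ℓ1 : ℤ) (ρ : Wt m1 m2 →* GL (Fin 2) ℂ) : Prop :=
  (ρ (wf1 m1 m2) : Matrix (Fin 2) (Fin 2) ℂ) = !![0, 1; 1, 0] ∧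
  (ρ (wf2 m1 m2) : Matrix (Fin 2) (Fin 2) ℂ) = !![1, 0; 0, -1] ∧
  (ρ (wr1 m1 m2) : Matrix (Fin 2) (Fin 2) ℂ) = Matrix.diagonal ![ζ m1 ^ ℓ1, ζ m1 ^ (-ℓ1)] ∧
  (ρ (wr2 m1 m2) : Matrix (Fin 2) (Fin 2) ℂ) = -1 ∧
  (ρ (wz m1 m2) : Matrix (Fin 2) (Fin 2) ℂ) = -1

/-- An isomorphism from an abstract representation to a 4-dimensional matrix
representation. -/
def EquivTo4 {m1 m2 : ℕ} {V : Type*} [AddCommGroup V] [Module ℂ V]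
    (ρ : Representation ℂ (Wt m1 m2) V) (ρ' : Wt m1 m2 →* GL (Fin 4) ℂ) : Prop :=
  ∃ T : V ≃ₗ[ℂ] (Fin 4 → ℂ), ∀ (g : Wt m1 m2) (v : V),
    T (ρ g v) = Matrix.mulVec (ρ' g : Matrix (Fin 4) (Fin 4) ℂ) (T v)

/-- An isomorphism from an abstract representation to a 2-dimensional matrix
representation. -/
def EquivTo2 {m1 m2 : ℕ} {V : Type*} [AddCommGroup V] [Module ℂ V]
    (ρ : Representation ℂ (Wt m1 m2) V) (ρ' : Wt m1 m2 →* GL (Fin 2) ℂ) : Prop :=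
  ∃ T : V ≃ₗ[ℂ] (Fin 2 → ℂ), ∀ (g : Wt m1 m2) (v : V),
    T (ρ g v) = Matrix.mulVec (ρ' g : Matrix (Fin 2) (Fin 2) ℂ) (T v)

end Stmt10

namespace Module.End

variable {k V : Type*} [Field k] [AddCommGroup V] [Module k V]

lemma exists_eigenvector_of_commute [IsAlgClosed k] [FiniteDimensional k V] [Nontrivial V]
    {a b : Module.End k V} (hab : Commute a b) :
    ∃ v ≠ 0, ∃ μ ν : k, a v = μ • v ∧ b v = ν • v := by
  obtain ⟨μ, hμ⟩ := Module.End.exists_eigenvalue a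
  have hb : ∀ x ∈ a.eigenspace μ, b x ∈ a.eigenspace μ := fun x hx => by
    rw [Module.End.mem_eigenspace_iff] at hx ⊢
    rw [← Module.End.mul_apply, hab.eq, Module.End.mul_apply, hx, map_smul]
  have : Nontrivial (a.eigenspace μ) := Submodule.nontrivial_iff_ne_bot.mpr hμ
  obtain ⟨ν, hν⟩ := Module.End.exists_eigenvalue (b.restrict hb)
  obtain ⟨x, hx⟩ := hν.exists_hasEigenvector
  refine ⟨x, by simpa using hx.2, μ, ν, Module.End.mem_eigenspace_iff.mp x.2, ?_⟩
  simpa using congrArg Subtype.val hx.apply_eq_smul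

lemma eq_zero_of_add_eq_zero_of_eigen {f : Module.End k V} {x y : V} {μ ν : k} (hμν : μ ≠ ν)
    (hx : f x = μ • x) (hy : f y = ν • y) (hxy : x + y = 0) : x = 0 ∧ y = 0 := by
  have hyx : y = -x := eq_neg_of_add_eq_zero_right hxy
  rw [hyx, map_neg, hx, smul_neg, neg_inj] at hy
  have hx0 : x = 0 :=
    (smul_eq_zero.1 (by rw [sub_smul, hy, sub_self] : (μ - ν) • x = 0)).resolve_left
      (sub_ne_zero.2 hμν)
  exact ⟨hx0, by rw [hyx, hx0, neg_zero]⟩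

lemma apply_smul_of_apply_eq_smul {f : Module.End k V} {x : V} {μ : k} (hx : f x = μ • x) (c : k) :
    f (c • x) = μ • c • x := by
  rw [map_smul, hx, smul_comm]

lemma linearIndependent_pair_of_eigen {f : Module.End k V} {x y : V} {μ ν : k} (hμν : μ ≠ ν)
    (hx0 : x ≠ 0) (hy0 : y ≠ 0) (hx : f x = μ • x) (hy : f y = ν • y) :
    LinearIndependent k ![x, y] := by
  refine LinearIndependent.pair_iff.2 fun s t hst => ?_
  obtain ⟨hs, ht⟩ := eq_zero_of_add_eq_zero_of_eigen hμν (apply_smul_of_apply_eq_smul hx s)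
    (apply_smul_of_apply_eq_smul hy t) hst
  exact ⟨(smul_eq_zero.1 hs).resolve_right hx0, (smul_eq_zero.1 ht).resolve_right hy0⟩

lemma linearIndependent_fin4_of_eigen {f g : Module.End k V} {μ μ' ν ν' : k} (hμ : μ ≠ μ')
    (hν : ν ≠ ν') {e : Fin 4 → V} (he : ∀ i, e i ≠ 0)
    (hf : ∀ i, f (e i) = ![μ, μ', μ, μ'] i • e i) (hg : ∀ i, g (e i) = ![ν, ν, ν', ν'] i • e i) :
    LinearIndependent k e := by
  refine Fintype.linearIndependent_iff.2 fun c hc => ?_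
  rw [Fin.sum_univ_four, add_assoc (c 0 • e 0 + _)] at hc
  have hfc : ∀ i, f (c i • e i) = ![μ, μ', μ, μ'] i • c i • e i := fun i =>
    apply_smul_of_apply_eq_smul (hf i) _
  have hgc : ∀ i, g (c i • e i) = ![ν, ν, ν', ν'] i • c i • e i := fun i =>
    apply_smul_of_apply_eq_smul (hg i) _
  obtain ⟨h01, h23⟩ := eq_zero_of_add_eq_zero_of_eigen hν
    (by simpa [smul_add] using congrArg₂ (· + ·) (hgc 0) (hgc 1))
    (by simpa [smul_add] using congrArg₂ (· + ·) (hgc 2) (hgc 3)) hc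
  obtain ⟨h0, h1⟩ := eq_zero_of_add_eq_zero_of_eigen hμ (hfc 0) (hfc 1) h01
  obtain ⟨h2, h3⟩ := eq_zero_of_add_eq_zero_of_eigen hμ (hfc 2) (hfc 3) h23
  intro i
  fin_cases i
  exacts [(smul_eq_zero.1 h0).resolve_right (he 0), (smul_eq_zero.1 h1).resolve_right (he 1),
    (smul_eq_zero.1 h2).resolve_right (he 2), (smul_eq_zero.1 h3).resolve_right (he 3)]

end Module.End

namespace Representation

variable {k G V : Type*} [Field k] [Group G] [AddCommGroup V] [Module k V]
  (ρ : Representation k G V)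

lemma inv_apply_of_apply_eq_smul {g : G} {v : V} {μ : k} (h : ρ g v = μ • v) :
    ρ g⁻¹ v = μ⁻¹ • v := by
  rcases eq_or_ne μ 0 with rfl | hμ
  · have hv : v = 0 := by simpa [h] using (ρ.inv_self_apply g v).symm
    simp [hv]
  · rw [ρ.inv_apply_eq_iff, map_smul, h, smul_smul, inv_mul_cancel₀ hμ, one_smul]

lemma apply_apply_of_mul_self {g : G} (h : g * g = 1) (v : V) : ρ g (ρ g v) = v := by
  rw [← Module.End.mul_apply, ← map_mul, h, map_one, Module.End.one_apply]

lemma apply_ne_zero (g : G) {v : V} (hv : v ≠ 0) : ρ g v ≠ 0 :=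
  fun h => hv ((ρ.apply_bijective g).injective (h.trans (map_zero _).symm))

lemma apply_pow_of_apply_eq_smul {g : G} {v : V} {μ : k} (h : ρ g v = μ • v) (n : ℕ) :
    ρ (g ^ n) v = μ ^ n • v := by
  induction n with
  | zero => simp
  | succ n ih => rw [pow_succ, map_mul, Module.End.mul_apply, h, map_smul, ih, smul_smul, pow_succ']

lemma pow_eq_neg_one_of_eigen {g : G} {n : ℕ} (hg : ρ (g ^ n) = -1) {v : V} (hv : v ≠ 0)
    {μ : k} (h : ρ g v = μ • v) : μ ^ n = -1 := by
  have := ρ.apply_pow_of_apply_eq_smul h n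
  rw [hg] at this
  exact smul_left_injective k hv (by simpa using this.symm)

lemma apply_eigen_of_commute {a f : G} (h : Commute a f) {v : V} {μ : k}
    (hv : ρ a v = μ • v) : ρ a (ρ f v) = μ • ρ f v := by
  rw [← Module.End.mul_apply, ← map_mul, h.eq, map_mul, Module.End.mul_apply, hv, map_smul]

lemma apply_eigen_of_mul_eq_mul_inv {a f : G} (h : a * f = f * a⁻¹) {v : V} {μ : k}
    (hv : ρ a v = μ • v) : ρ a (ρ f v) = μ⁻¹ • ρ f v := by
  rw [← Module.End.mul_apply, ← map_mul, h, map_mul, Module.End.mul_apply,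
    ρ.inv_apply_of_apply_eq_smul hv, map_smul]

lemma forall_inv_apply_mem [FiniteDimensional k V] {p : Submodule k V} {g : G}
    (h : ∀ v ∈ p, ρ g v ∈ p) : ∀ v ∈ p, ρ g⁻¹ v ∈ p := by
  have hinj : Function.Injective ((ρ g).restrict h) := fun u w huw =>
    Subtype.ext ((ρ.apply_bijective g).injective (congrArg Subtype.val huw))
  intro v hv
  obtain ⟨w, hw⟩ := LinearMap.injective_iff_surjective.mp hinj ⟨v, hv⟩
  have hw' : ρ g w = v := congrArg Subtype.val hw
  rw [← hw', ρ.inv_self_apply]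
  exact w.2

lemma forall_apply_mem_of_closure_eq_top [FiniteDimensional k V] {S : Set G}
    (hS : Subgroup.closure S = ⊤) {p : Submodule k V} (hp : ∀ s ∈ S, ∀ v ∈ p, ρ s v ∈ p)
    (g : G) : ∀ v ∈ p, ρ g v ∈ p := by
  have hg : g ∈ Subgroup.closure S := hS ▸ Subgroup.mem_top g
  induction hg using Subgroup.closure_induction with
  | mem s hs => exact hp s hs
  | one => simp
  | mul a b _ _ ha hb => intro v hv; rw [map_mul, Module.End.mul_apply]; exact ha _ (hb v hv)
  | inv a _ ha => exact ρ.forall_inv_apply_mem ha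

variable {ι : Type*} [Fintype ι] [DecidableEq ι]

noncomputable def matrixRep (b : Module.Basis ι k V) : G →* GL ι k :=
  (Units.map (LinearMap.toMatrixAlgEquiv b).toRingEquiv.toMonoidHom).comp ρ.toHomUnits

lemma coe_matrixRep (b : Module.Basis ι k V) (g : G) :
    (ρ.matrixRep b g : Matrix ι ι k) = LinearMap.toMatrix b b (ρ g) := rfl

lemma equivFun_apply_eq_mulVec (b : Module.Basis ι k V) (g : G) (v : V) :
    b.equivFun (ρ g v) = Matrix.mulVec (ρ.matrixRep b g : Matrix ι ι k) (b.equivFun v) := by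
  rw [coe_matrixRep, Module.Basis.equivFun_apply, Module.Basis.equivFun_apply,
    LinearMap.toMatrix_mulVec_repr]

theorem exists_matrixRep_of_apply_eq_sum [FiniteDimensional k V] {α : Type*} {gen : α → G}
    (hgen : Subgroup.closure (Set.range gen) = ⊤)
    (hirr : ∀ p : Submodule k V, (∀ g : G, ∀ v ∈ p, ρ g v ∈ p) → p = ⊥ ∨ p = ⊤)
    {ι : Type*} [Fintype ι] [DecidableEq ι] [Nonempty ι] {e : ι → V}
    (he : LinearIndependent k e) (M : α → Matrix ι ι k)
    (hM : ∀ a j, ρ (gen a) (e j) = ∑ i, M a i j • e i) :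
    ∃ ρ' : G →* GL ι k, (∀ a, (ρ' (gen a) : Matrix ι ι k) = M a) ∧
      ∃ T : V ≃ₗ[k] (ι → k), ∀ g v,
        T (ρ g v) = Matrix.mulVec (ρ' g : Matrix ι ι k) (T v) := by
  set p := Submodule.span k (Set.range e)
  have hgen_p : ∀ s ∈ Set.range gen, ∀ v ∈ p, ρ s v ∈ p := by
    rintro _ ⟨a, rfl⟩ v hv
    refine (Submodule.map_span_le _ _ p).2 ?_ (Submodule.mem_map_of_mem hv)
    rintro _ ⟨j, rfl⟩
    rw [hM]
    exact Submodule.sum_mem _ fun i _ => p.smul_mem _ (Submodule.subset_span ⟨i, rfl⟩)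
  have hp : p = ⊤ := by
    refine (hirr p (ρ.forall_apply_mem_of_closure_eq_top hgen hgen_p)).resolve_left fun h => ?_
    refine he.ne_zero (Classical.arbitrary ι) ?_
    rw [← Submodule.mem_bot k, ← h]
    exact Submodule.subset_span (Set.mem_range_self _)
  let b := Module.Basis.mk he hp.ge
  refine ⟨ρ.matrixRep b, fun a => ?_, b.equivFun, ρ.equivFun_apply_eq_mulVec b⟩
  rw [coe_matrixRep, ← LinearMap.toMatrix_toLin b b (M a)]
  congr 1
  refine b.ext fun j => ?_
  rw [Matrix.toLin_self, Module.Basis.mk_apply, hM]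
  simp [b]

theorem eq_neg_one_of_apply_eq_neg [FiniteDimensional k V] {α : Type*} {gen : α → G}
    (hgen : Subgroup.closure (Set.range gen) = ⊤)
    (hirr : ∀ p : Submodule k V, (∀ g : G, ∀ v ∈ p, ρ g v ∈ p) → p = ⊥ ∨ p = ⊤) {a : G}
    (ha : ∀ x, Commute a (gen x) ∨ a * gen x = gen x * a⁻¹) {v : V} (hv : v ≠ 0)
    (hav : ρ a v = -v) : ρ a = -1 := by
  set p := Module.End.eigenspace (ρ a) (-1)
  have hmem : ∀ w, w ∈ p ↔ ρ a w = -w := fun w => by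
    rw [Module.End.mem_eigenspace_iff, neg_one_smul]
  have hgen_p : ∀ s ∈ Set.range gen, ∀ w ∈ p, ρ s w ∈ p := by
    rintro _ ⟨x, rfl⟩ w hw
    rw [hmem, ← neg_one_smul k w] at hw
    rw [hmem, ← neg_one_smul k (ρ (gen x) w)]
    rcases ha x with hc | hc
    · exact ρ.apply_eigen_of_commute hc hw
    · simpa using ρ.apply_eigen_of_mul_eq_mul_inv hc hw
  have hp : p = ⊤ := by
    refine (hirr p (ρ.forall_apply_mem_of_closure_eq_top hgen hgen_p)).resolve_left fun h => hv ?_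
    simpa [h] using (hmem v).2 hav
  ext w
  simpa using (hmem w).1 (hp ▸ Submodule.mem_top)

lemma exists_fixed_eigenvector {f f' b : G} (hf : f * f = 1) (hbf : Commute b f)
    (hbf' : b * f' = f' * b⁻¹) (hanti : ∀ w, ρ f (ρ f' w) = -ρ f' (ρ f w)) {v : V}
    (hv : v ≠ 0) {ν : k} (hbv : ρ b v = ν • v) :
    ∃ u ≠ 0, ρ f u = u ∧ (ρ b u = ν • u ∨ ρ b u = ν⁻¹ • u) := by
  by_cases hsum : v + ρ f v = 0
  · -- then `f` acts on `v` by `-1`, and on `f' v` by `+1`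
    refine ⟨ρ f' v, ρ.apply_ne_zero f' hv, ?_, Or.inr (ρ.apply_eigen_of_mul_eq_mul_inv hbf' hbv)⟩
    rw [hanti, eq_neg_of_add_eq_zero_right hsum, map_neg, neg_neg]
  · refine ⟨v + ρ f v, hsum, ?_, Or.inl ?_⟩
    · rw [map_add, ρ.apply_apply_of_mul_self hf, add_comm]
    · rw [map_add, hbv, ρ.apply_eigen_of_commute hbf hbv, smul_add]

end Representation

namespace Stmt10

section Zeta

variable {m : ℕ}

lemma zeta_ne_zero : ζ m ≠ 0 := Complex.exp_ne_zero _

lemma zeta_pow_self (hm : m ≠ 0) : ζ m ^ m = -1 := by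
  rw [ζ, ← Complex.exp_nat_mul, mul_div_cancel₀ _ (Nat.cast_ne_zero.2 hm), Complex.exp_pi_mul_I]

lemma zeta_zpow_self (hm : m ≠ 0) : ζ m ^ (m : ℤ) = -1 := by
  rw [zpow_natCast, zeta_pow_self hm]

lemma isPrimitiveRoot_zeta (hm : m ≠ 0) : IsPrimitiveRoot (ζ m) (2 * m) := by
  convert Complex.isPrimitiveRoot_exp (2 * m) (by omega) using 2
  rw [ζ]
  push_cast
  ring_nf

lemma zeta_zpow_two_mul (m : ℕ) : ζ m ^ (2 * m : ℤ) = 1 := by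
  rcases eq_or_ne m 0 with rfl | hm
  · simp
  · exact_mod_cast (isPrimitiveRoot_zeta hm).pow_eq_one

lemma inv_zeta_zpow (ℓ : ℤ) : (ζ m ^ ℓ)⁻¹ = ζ m ^ (2 * m - ℓ) := by
  rw [zpow_sub₀ zeta_ne_zero, zeta_zpow_two_mul, one_div]

lemma zeta_zpow_ne_zpow_neg {ℓ : ℤ} (h0 : 0 < ℓ) (hℓm : ℓ < m) : ζ m ^ ℓ ≠ ζ m ^ (-ℓ) := by
  intro h
  have h2 : ζ m ^ (2 * ℓ) = 1 := by
    rw [two_mul, zpow_add₀ zeta_ne_zero]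
    nth_rw 1 [h]
    rw [← zpow_add₀ zeta_ne_zero, neg_add_cancel, zpow_zero]
  have := Int.le_of_dvd (by omega) (((isPrimitiveRoot_zeta (by omega)).zpow_eq_one_iff_dvd _).1 h2)
  push_cast at this
  omega

lemma exists_odd_eq_zeta_zpow (hm : m ≠ 0) {μ : ℂ} (hμ : μ ^ m = -1) :
    ∃ ℓ : ℤ, Odd ℓ ∧ 0 < ℓ ∧ ℓ < 2 * m ∧ μ = ζ m ^ ℓ := by
  have : NeZero (2 * m) := ⟨by omega⟩
  obtain ⟨i, hi, rfl⟩ := (isPrimitiveRoot_zeta hm).eq_pow_of_pow_eq_one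
    (by rw [mul_comm, pow_mul, hμ, neg_one_sq])
  have hodd : Odd i := by
    by_contra hev
    rw [Nat.not_odd_iff_even] at hev
    rw [← pow_mul, mul_comm, pow_mul, zeta_pow_self hm, hev.neg_one_pow] at hμ
    norm_num at hμ
  exact ⟨i, by exact_mod_cast hodd, by exact_mod_cast hodd.pos, by exact_mod_cast hi,
    (zpow_natCast _ _).symm⟩

lemma exists_eigenvector_zpow_le {G V : Type*} [Group G] [AddCommGroup V] [Module ℂ V]
    (ρ : Representation ℂ G V) {a b f : G} (haf : a * f = f * a⁻¹) (hbf : Commute b f)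
    {ℓ : ℤ} (hℓ : Odd ℓ) (h0 : 0 < ℓ) (hℓm : ℓ < 2 * m) {v : V} (hv : v ≠ 0)
    (hav : ρ a v = ζ m ^ ℓ • v) {ν : ℂ} (hbv : ρ b v = ν • v) :
    ∃ ℓ' : ℤ, Odd ℓ' ∧ 0 < ℓ' ∧ ℓ' ≤ m ∧ ∃ w ≠ 0, ρ a w = ζ m ^ ℓ' • w ∧ ρ b w = ν • w := by
  rcases le_or_gt ℓ m with hle | hlt
  · exact ⟨ℓ, hℓ, h0, hle, v, hv, hav, hbv⟩
  · refine ⟨2 * m - ℓ, (even_two_mul _).sub_odd hℓ, by omega, by omega, ρ f v,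
      ρ.apply_ne_zero f hv, ?_, ρ.apply_eigen_of_commute hbf hbv⟩
    rw [ρ.apply_eigen_of_mul_eq_mul_inv haf hav, inv_zeta_zpow]

end Zeta

section Relations

variable {m1 m2 : ℕ}

open PresentedGroup

lemma wr1_pow : wr1 m1 m2 ^ m1 = wz m1 m2 := by
  have h := mk_eq_mk_of_mul_inv_mem (rels := rels m1 m2) (x := .of .r1 ^ m1) (y := .of .z)
    (by simp [rels])
  rwa [map_pow] at h

lemma wr2_pow : wr2 m1 m2 ^ m2 = wz m1 m2 := by
  have h := mk_eq_mk_of_mul_inv_mem (rels := rels m1 m2) (x := .of .r2 ^ m2) (y := .of .z)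
    (by simp [rels])
  rwa [map_pow] at h

lemma wf1_mul_self : wf1 m1 m2 * wf1 m1 m2 = 1 := by
  have h := one_of_mem (rels := rels m1 m2) (x := .of .f1 ^ 2) (by simp [rels])
  rwa [map_pow, pow_two] at h

lemma wf2_mul_self : wf2 m1 m2 * wf2 m1 m2 = 1 := by
  have h := one_of_mem (rels := rels m1 m2) (x := .of .f2 ^ 2) (by simp [rels])
  rwa [map_pow, pow_two] at h

lemma wr1_mul_wf1 : wr1 m1 m2 * wf1 m1 m2 = wf1 m1 m2 * (wr1 m1 m2)⁻¹ := by
  have h : (wr1 m1 m2 * wf1 m1 m2) * (wr1 m1 m2 * wf1 m1 m2) = 1 := by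
    have h := one_of_mem (rels := rels m1 m2) (x := (.of .r1 * .of .f1) ^ 2) (by simp [rels])
    rwa [map_pow, map_mul, pow_two] at h
  rwa [mul_eq_one_iff_eq_inv, mul_inv_rev, inv_eq_of_mul_eq_one_right wf1_mul_self] at h

lemma wr2_mul_wf2 : wr2 m1 m2 * wf2 m1 m2 = wf2 m1 m2 * (wr2 m1 m2)⁻¹ := by
  have h : (wr2 m1 m2 * wf2 m1 m2) * (wr2 m1 m2 * wf2 m1 m2) = 1 := by
    have h := one_of_mem (rels := rels m1 m2) (x := (.of .r2 * .of .f2) ^ 2) (by simp [rels])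
    rwa [map_pow, map_mul, pow_two] at h
  rwa [mul_eq_one_iff_eq_inv, mul_inv_rev, inv_eq_of_mul_eq_one_right wf2_mul_self] at h

lemma commute_wr1_wr2 : Commute (wr1 m1 m2) (wr2 m1 m2) := by
  have h := mk_eq_mk_of_mul_inv_mem (rels := rels m1 m2) (x := .of .r1 * .of .r2)
    (y := .of .r2 * .of .r1) (by simp [rels])
  rwa [map_mul, map_mul] at h

lemma commute_wr1_wf2 : Commute (wr1 m1 m2) (wf2 m1 m2) := by
  have h := mk_eq_mk_of_mul_inv_mem (rels := rels m1 m2) (x := .of .r1 * .of .f2)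
    (y := .of .f2 * .of .r1) (by simp [rels])
  rwa [map_mul, map_mul] at h

lemma commute_wr2_wf1 : Commute (wr2 m1 m2) (wf1 m1 m2) := by
  have h := mk_eq_mk_of_mul_inv_mem (rels := rels m1 m2) (x := .of .r2 * .of .f1)
    (y := .of .f1 * .of .r2) (by simp [rels])
  rwa [map_mul, map_mul] at h

lemma commute_wr1_wz : Commute (wr1 m1 m2) (wz m1 m2) :=
  wr1_pow ▸ Commute.self_pow _ _

lemma commute_wr2_wz : Commute (wr2 m1 m2) (wz m1 m2) :=
  wr2_pow ▸ Commute.self_pow _ _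

lemma wf1_mul_wf2 : wf1 m1 m2 * wf2 m1 m2 = wz m1 m2 * (wf2 m1 m2 * wf1 m1 m2) := by
  have h : (wf1 m1 m2 * wf2 m1 m2) * (wf1 m1 m2 * wf2 m1 m2) = wz m1 m2 := by
    have h := mk_eq_mk_of_mul_inv_mem (rels := rels m1 m2) (x := (.of .f1 * .of .f2) ^ 2)
      (y := .of .z) (by simp [rels])
    rwa [map_pow, map_mul, pow_two] at h
  rw [eq_mul_inv_of_mul_eq h, mul_inv_rev, inv_eq_of_mul_eq_one_right wf1_mul_self,
    inv_eq_of_mul_eq_one_right wf2_mul_self]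

end Relations

section Representations

variable {m1 m2 : ℕ} {V : Type*} [AddCommGroup V] [Module ℂ V]
  (ρ : Representation ℂ (Wt m1 m2) V)

lemma exists_eigenvector_wr1_wr2 [FiniteDimensional ℂ V] [Nontrivial V] (h1 : 1 ≤ m1)
    (h2 : 1 ≤ m2) (hz : ρ (wz m1 m2) = -1) :
    ∃ ℓ1 ℓ2 : ℤ, Odd ℓ1 ∧ Odd ℓ2 ∧ 0 < ℓ1 ∧ ℓ1 ≤ m1 ∧ 0 < ℓ2 ∧ ℓ2 ≤ m2 ∧
      ∃ v ≠ 0, ρ (wr1 m1 m2) v = ζ m1 ^ ℓ1 • v ∧ ρ (wr2 m1 m2) v = ζ m2 ^ ℓ2 • v := by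
  obtain ⟨v, hv, μ, ν, h1v, h2v⟩ :=
    Module.End.exists_eigenvector_of_commute (commute_wr1_wr2.map ρ)
  obtain ⟨ℓ1, hℓ1, h0ℓ1, hℓ1m, rfl⟩ := exists_odd_eq_zeta_zpow (by omega : m1 ≠ 0)
    (ρ.pow_eq_neg_one_of_eigen (by rw [wr1_pow, hz]) hv h1v)
  obtain ⟨ℓ2, hℓ2, h0ℓ2, hℓ2m, rfl⟩ := exists_odd_eq_zeta_zpow (by omega : m2 ≠ 0)
    (ρ.pow_eq_neg_one_of_eigen (by rw [wr2_pow, hz]) hv h2v)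
  obtain ⟨ℓ1, hℓ1, h0ℓ1, hℓ1m, v, hv, h1v, h2v⟩ :=
    exists_eigenvector_zpow_le ρ wr1_mul_wf1 commute_wr2_wf1 hℓ1 h0ℓ1 hℓ1m hv h1v h2v
  obtain ⟨ℓ2, hℓ2, h0ℓ2, hℓ2m, v, hv, h2v, h1v⟩ :=
    exists_eigenvector_zpow_le ρ wr2_mul_wf2 commute_wr1_wf2 hℓ2 h0ℓ2 hℓ2m hv h2v h1v
  exact ⟨ℓ1, ℓ2, hℓ1, hℓ2, h0ℓ1, hℓ1m, h0ℓ2, hℓ2m, v, hv, h1v, h2v⟩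

lemma apply_wf2_wf1 (hz : ρ (wz m1 m2) = -1) (w : V) :
    ρ (wf2 m1 m2) (ρ (wf1 m1 m2) w) = -ρ (wf1 m1 m2) (ρ (wf2 m1 m2) w) := by
  have h : ρ (wf1 m1 m2 * wf2 m1 m2) w = -ρ (wf2 m1 m2 * wf1 m1 m2) w := by
    rw [wf1_mul_wf2, map_mul, hz, neg_one_mul, LinearMap.neg_apply]
  rw [map_mul, map_mul, Module.End.mul_apply, Module.End.mul_apply] at h
  rw [h, neg_neg]

lemma exists_isU2First [FiniteDimensional ℂ V] (hz : ρ (wz m1 m2) = -1)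
    (hirr : ∀ p : Submodule ℂ V, (∀ g : Wt m1 m2, ∀ v ∈ p, ρ g v ∈ p) → p = ⊥ ∨ p = ⊤)
    (hr1 : ρ (wr1 m1 m2) = -1) {ℓ2 : ℤ} {u : V} (hu : u ≠ 0) (hf1u : ρ (wf1 m1 m2) u = u)
    (hr2u : ρ (wr2 m1 m2) u = ζ m2 ^ ℓ2 • u) :
    ∃ ρ' : Wt m1 m2 →* GL (Fin 2) ℂ, IsU2First m1 m2 ℓ2 ρ' ∧ EquivTo2 ρ ρ' := by
  have hf1u' : ρ (wf1 m1 m2) (ρ (wf2 m1 m2) u) = -ρ (wf2 m1 m2) u := by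
    rw [← neg_eq_iff_eq_neg, ← apply_wf2_wf1 ρ hz, hf1u]
  have hr2u' : ρ (wr2 m1 m2) (ρ (wf2 m1 m2) u) = ζ m2 ^ (-ℓ2) • ρ (wf2 m1 m2) u := by
    rw [zpow_neg]
    exact ρ.apply_eigen_of_mul_eq_mul_inv wr2_mul_wf2 hr2u
  have hli : LinearIndependent ℂ ![u, ρ (wf2 m1 m2) u] :=
    Module.End.linearIndependent_pair_of_eigen (f := ρ (wf1 m1 m2)) (by norm_num : (1 : ℂ) ≠ -1)
      hu (ρ.apply_ne_zero _ hu) (by rw [hf1u, one_smul]) (by rw [hf1u', neg_one_smul])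
  obtain ⟨ρ', hρ', T, hT⟩ := ρ.exists_matrixRep_of_apply_eq_sum
    (PresentedGroup.closure_range_of (rels m1 m2)) hirr hli
    (fun
      | .z => -1
      | .r1 => -1
      | .f1 => !![1, 0; 0, -1]
      | .r2 => Matrix.diagonal ![ζ m2 ^ ℓ2, ζ m2 ^ (-ℓ2)]
      | .f2 => !![0, 1; 1, 0])
    (by
      rintro (_ | _ | _ | _ | _) j <;> fin_cases j <;>
        simp [← wz.eq_1, ← wr1.eq_1, ← wf1.eq_1, ← wr2.eq_1, ← wf2.eq_1, Fin.sum_univ_two, hz,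
          hr1, hf1u, hf1u', hr2u, hr2u', ρ.apply_apply_of_mul_self wf2_mul_self])
  exact ⟨ρ', ⟨hρ' .f1, hρ' .f2, hρ' .r1, hρ' .r2, hρ' .z⟩, T, hT⟩

lemma exists_isU2Second [FiniteDimensional ℂ V] (hz : ρ (wz m1 m2) = -1)
    (hirr : ∀ p : Submodule ℂ V, (∀ g : Wt m1 m2, ∀ v ∈ p, ρ g v ∈ p) → p = ⊥ ∨ p = ⊤)
    (hr2 : ρ (wr2 m1 m2) = -1) {ℓ1 : ℤ} {u : V} (hu : u ≠ 0) (hf2u : ρ (wf2 m1 m2) u = u)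
    (hr1u : ρ (wr1 m1 m2) u = ζ m1 ^ ℓ1 • u) :
    ∃ ρ' : Wt m1 m2 →* GL (Fin 2) ℂ, IsU2Second m1 m2 ℓ1 ρ' ∧ EquivTo2 ρ ρ' := by
  have hf2u' : ρ (wf2 m1 m2) (ρ (wf1 m1 m2) u) = -ρ (wf1 m1 m2) u := by
    rw [apply_wf2_wf1 ρ hz, hf2u]
  have hr1u' : ρ (wr1 m1 m2) (ρ (wf1 m1 m2) u) = ζ m1 ^ (-ℓ1) • ρ (wf1 m1 m2) u := by
    rw [zpow_neg]
    exact ρ.apply_eigen_of_mul_eq_mul_inv wr1_mul_wf1 hr1u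
  have hli : LinearIndependent ℂ ![u, ρ (wf1 m1 m2) u] :=
    Module.End.linearIndependent_pair_of_eigen (f := ρ (wf2 m1 m2)) (by norm_num : (1 : ℂ) ≠ -1)
      hu (ρ.apply_ne_zero _ hu) (by rw [hf2u, one_smul]) (by rw [hf2u', neg_one_smul])
  obtain ⟨ρ', hρ', T, hT⟩ := ρ.exists_matrixRep_of_apply_eq_sum
    (PresentedGroup.closure_range_of (rels m1 m2)) hirr hli
    (fun
      | .z => -1
      | .r1 => Matrix.diagonal ![ζ m1 ^ ℓ1, ζ m1 ^ (-ℓ1)]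
      | .f1 => !![0, 1; 1, 0]
      | .r2 => -1
      | .f2 => !![1, 0; 0, -1])
    (by
      rintro (_ | _ | _ | _ | _) j <;> fin_cases j <;>
        simp [← wz.eq_1, ← wr1.eq_1, ← wf1.eq_1, ← wr2.eq_1, ← wf2.eq_1, Fin.sum_univ_two, hz,
          hr2, hf2u, hf2u', hr1u, hr1u', ρ.apply_apply_of_mul_self wf1_mul_self])
  exact ⟨ρ', ⟨hρ' .f1, hρ' .f2, hρ' .r1, hρ' .r2, hρ' .z⟩, T, hT⟩

lemma exists_isU4 [FiniteDimensional ℂ V] (hz : ρ (wz m1 m2) = -1)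
    (hirr : ∀ p : Submodule ℂ V, (∀ g : Wt m1 m2, ∀ v ∈ p, ρ g v ∈ p) → p = ⊥ ∨ p = ⊤)
    {ℓ1 ℓ2 : ℤ} (h0ℓ1 : 0 < ℓ1) (hℓ1 : ℓ1 < m1) (h0ℓ2 : 0 < ℓ2) (hℓ2 : ℓ2 < m2) {v : V}
    (hv : v ≠ 0) (h1v : ρ (wr1 m1 m2) v = ζ m1 ^ ℓ1 • v)
    (h2v : ρ (wr2 m1 m2) v = ζ m2 ^ ℓ2 • v) :
    ∃ ρ' : Wt m1 m2 →* GL (Fin 4) ℂ, IsU4 m1 m2 ℓ1 ℓ2 ρ' ∧ EquivTo4 ρ ρ' := by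
  set f1 := ρ (wf1 m1 m2)
  set f2 := ρ (wf2 m1 m2)
  have h1f1 : ∀ {w μ}, ρ (wr1 m1 m2) w = μ • w → ρ (wr1 m1 m2) (f1 w) = μ⁻¹ • f1 w :=
    ρ.apply_eigen_of_mul_eq_mul_inv wr1_mul_wf1
  have h1f2 : ∀ {w μ}, ρ (wr1 m1 m2) w = μ • w → ρ (wr1 m1 m2) (f2 w) = μ • f2 w :=
    ρ.apply_eigen_of_commute commute_wr1_wf2
  have h2f1 : ∀ {w μ}, ρ (wr2 m1 m2) w = μ • w → ρ (wr2 m1 m2) (f1 w) = μ • f1 w :=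
    ρ.apply_eigen_of_commute commute_wr2_wf1
  have h2f2 : ∀ {w μ}, ρ (wr2 m1 m2) w = μ • w → ρ (wr2 m1 m2) (f2 w) = μ⁻¹ • f2 w :=
    ρ.apply_eigen_of_mul_eq_mul_inv wr2_mul_wf2
  have he : ∀ i, ![v, f1 v, f2 v, f1 (f2 v)] i ≠ 0 := by
    intro i
    fin_cases i
    exacts [hv, ρ.apply_ne_zero _ hv, ρ.apply_ne_zero _ hv,
      ρ.apply_ne_zero _ (ρ.apply_ne_zero _ hv)]
  have hli : LinearIndependent ℂ ![v, f1 v, f2 v, f1 (f2 v)] :=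
    Module.End.linearIndependent_fin4_of_eigen (f := ρ (wr1 m1 m2)) (g := ρ (wr2 m1 m2))
      (zeta_zpow_ne_zpow_neg h0ℓ1 hℓ1)
      (zeta_zpow_ne_zpow_neg h0ℓ2 hℓ2) he
      (by intro i; fin_cases i <;> simp [h1v, h1f1 h1v, h1f2 h1v, h1f1 (h1f2 h1v)])
      (by intro i; fin_cases i <;> simp [h2v, h2f1 h2v, h2f2 h2v, h2f1 (h2f2 h2v)])
  obtain ⟨ρ', hρ', T, hT⟩ := ρ.exists_matrixRep_of_apply_eq_sum
    (PresentedGroup.closure_range_of (rels m1 m2)) hirr hli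
    (fun
      | .z => -1
      | .r1 => R1 m1 ℓ1
      | .f1 => F1
      | .r2 => R2 m2 ℓ2
      | .f2 => F2)
    (by
      rintro (_ | _ | _ | _ | _) j <;> fin_cases j <;>
        simp [← wz.eq_1, ← wr1.eq_1, ← wf1.eq_1, ← wr2.eq_1, ← wf2.eq_1, Fin.sum_univ_four, R1, R2,
          F1, F2, hz, h1v, h1f1 h1v, h1f2 h1v, h1f1 (h1f2 h1v), h2v, h2f1 h2v, h2f2 h2v,
          h2f1 (h2f2 h2v), apply_wf2_wf1 ρ hz, f1, f2, ρ.apply_apply_of_mul_self wf1_mul_self,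
          ρ.apply_apply_of_mul_self wf2_mul_self])
  exact ⟨ρ', ⟨hρ' .f1, hρ' .f2, hρ' .r1, hρ' .r2, hρ' .z⟩, T, hT⟩

lemma exists_isU2First_of_apply_wr1_eq_neg [FiniteDimensional ℂ V] (hz : ρ (wz m1 m2) = -1)
    (hirr : ∀ p : Submodule ℂ V, (∀ g : Wt m1 m2, ∀ v ∈ p, ρ g v ∈ p) → p = ⊥ ∨ p = ⊤)
    {ℓ2 : ℤ} (hℓ2 : Odd ℓ2) (h0ℓ2 : 0 < ℓ2) (hℓ2m : ℓ2 ≤ m2) {v : V} (hv : v ≠ 0)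
    (h1v : ρ (wr1 m1 m2) v = -v) (h2v : ρ (wr2 m1 m2) v = ζ m2 ^ ℓ2 • v) :
    ∃ ℓ : ℤ, Odd ℓ ∧ 0 < ℓ ∧ ℓ < 2 * m2 ∧
      ∃ ρ' : Wt m1 m2 →* GL (Fin 2) ℂ, IsU2First m1 m2 ℓ ρ' ∧ EquivTo2 ρ ρ' := by
  have hr1 : ρ (wr1 m1 m2) = -1 := by
    refine ρ.eq_neg_one_of_apply_eq_neg (PresentedGroup.closure_range_of _) hirr ?_ hv h1v
    rintro (_ | _ | _ | _ | _)
    exacts [.inl commute_wr1_wz, .inl (.refl _), .inr wr1_mul_wf1, .inl commute_wr1_wr2,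
      .inl commute_wr1_wf2]
  obtain ⟨u, hu, hf1u, h2u | h2u⟩ := ρ.exists_fixed_eigenvector wf1_mul_self commute_wr2_wf1
    wr2_mul_wf2 (fun w => by rw [apply_wf2_wf1 ρ hz, neg_neg]) hv h2v
  · exact ⟨ℓ2, hℓ2, h0ℓ2, by omega, exists_isU2First ρ hz hirr hr1 hu hf1u h2u⟩
  · rw [inv_zeta_zpow] at h2u
    exact ⟨2 * m2 - ℓ2, (even_two_mul _).sub_odd hℓ2, by omega, by omega,
      exists_isU2First ρ hz hirr hr1 hu hf1u h2u⟩

lemma exists_isU2Second_of_apply_wr2_eq_neg [FiniteDimensional ℂ V] (hz : ρ (wz m1 m2) = -1)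
    (hirr : ∀ p : Submodule ℂ V, (∀ g : Wt m1 m2, ∀ v ∈ p, ρ g v ∈ p) → p = ⊥ ∨ p = ⊤)
    {ℓ1 : ℤ} (hℓ1 : Odd ℓ1) (h0ℓ1 : 0 < ℓ1) (hℓ1m : ℓ1 ≤ m1) {v : V} (hv : v ≠ 0)
    (h1v : ρ (wr1 m1 m2) v = ζ m1 ^ ℓ1 • v) (h2v : ρ (wr2 m1 m2) v = -v) :
    ∃ ℓ : ℤ, Odd ℓ ∧ 0 < ℓ ∧ ℓ < 2 * m1 ∧
      ∃ ρ' : Wt m1 m2 →* GL (Fin 2) ℂ, IsU2Second m1 m2 ℓ ρ' ∧ EquivTo2 ρ ρ' := by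
  have hr2 : ρ (wr2 m1 m2) = -1 := by
    refine ρ.eq_neg_one_of_apply_eq_neg (PresentedGroup.closure_range_of _) hirr ?_ hv h2v
    rintro (_ | _ | _ | _ | _)
    exacts [.inl commute_wr2_wz, .inl commute_wr1_wr2.symm, .inl commute_wr2_wf1, .inl (.refl _),
      .inr wr2_mul_wf2]
  obtain ⟨u, hu, hf2u, h1u | h1u⟩ := ρ.exists_fixed_eigenvector wf2_mul_self commute_wr1_wf2
    wr1_mul_wf1 (apply_wf2_wf1 ρ hz) hv h1v
  · exact ⟨ℓ1, hℓ1, h0ℓ1, by omega, exists_isU2Second ρ hz hirr hr2 hu hf2u h1u⟩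
  · rw [inv_zeta_zpow] at h1u
    exact ⟨2 * m1 - ℓ1, (even_two_mul _).sub_odd hℓ1, by omega, by omega,
      exists_isU2Second ρ hz hirr hr2 hu hf2u h1u⟩

end Representations

/-- Classification: every finite-dimensional irreducible complex representation of
`W̃(m1,m2)` on which `z` acts as `−Id` is isomorphic to a `U(ℓ1,ℓ2)` with `ℓ1, ℓ2` odd,
`0 < ℓ1 < m1`, `0 < ℓ2 < m2`; or, if `m1` is odd, to a `U(m1,ℓ2)` with `ℓ2` odd,
`0 < ℓ2 < 2 m2`; or, if `m2` is odd, to a `U(ℓ1,m2)` with `ℓ1` odd, `0 < ℓ1 < 2 m1`. -/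
theorem classification_of_spin_representations (m1 m2 : ℕ) (h1 : 1 ≤ m1) (h2 : 1 ≤ m2)
    (V : Type*) [AddCommGroup V] [Module ℂ V] [FiniteDimensional ℂ V] [Nontrivial V]
    (ρ : Representation ℂ (Wt m1 m2) V)
    (hz : ρ (wz m1 m2) = -1)
    (hirr : ∀ p : Submodule ℂ V,
      (∀ g : Wt m1 m2, ∀ v ∈ p, ρ g v ∈ p) → p = ⊥ ∨ p = ⊤) :
    (∃ ℓ1 ℓ2 : ℤ, Odd ℓ1 ∧ Odd ℓ2 ∧ 0 < ℓ1 ∧ ℓ1 < m1 ∧ 0 < ℓ2 ∧ ℓ2 < m2 ∧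
      ∃ ρ' : Wt m1 m2 →* GL (Fin 4) ℂ, IsU4 m1 m2 ℓ1 ℓ2 ρ' ∧ EquivTo4 ρ ρ') ∨
    (Odd m1 ∧ ∃ ℓ2 : ℤ, Odd ℓ2 ∧ 0 < ℓ2 ∧ ℓ2 < 2 * m2 ∧
      ∃ ρ' : Wt m1 m2 →* GL (Fin 2) ℂ, IsU2First m1 m2 ℓ2 ρ' ∧ EquivTo2 ρ ρ') ∨
    (Odd m2 ∧ ∃ ℓ1 : ℤ, Odd ℓ1 ∧ 0 < ℓ1 ∧ ℓ1 < 2 * m1 ∧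
      ∃ ρ' : Wt m1 m2 →* GL (Fin 2) ℂ, IsU2Second m1 m2 ℓ1 ρ' ∧ EquivTo2 ρ ρ') := by
  obtain ⟨ℓ1, ℓ2, hℓ1, hℓ2, h0ℓ1, hℓ1m, h0ℓ2, hℓ2m, v, hv, h1v, h2v⟩ :=
    exists_eigenvector_wr1_wr2 ρ h1 h2 hz
  rcases hℓ1m.lt_or_eq with hlt1 | rfl
  · rcases hℓ2m.lt_or_eq with hlt2 | rfl
    · exact .inl ⟨ℓ1, ℓ2, hℓ1, hℓ2, h0ℓ1, hlt1, h0ℓ2, hlt2,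
        exists_isU4 ρ hz hirr h0ℓ1 hlt1 h0ℓ2 hlt2 hv h1v h2v⟩
    · rw [zeta_zpow_self (by omega), neg_one_smul] at h2v
      exact .inr (.inr ⟨(Int.odd_coe_nat m2).1 hℓ2,
        exists_isU2Second_of_apply_wr2_eq_neg ρ hz hirr hℓ1 h0ℓ1 hℓ1m hv h1v h2v⟩)
  · rw [zeta_zpow_self (by omega), neg_one_smul] at h1v
    exact .inr (.inl ⟨(Int.odd_coe_nat m1).1 hℓ1,
      exists_isU2First_of_apply_wr1_eq_neg ρ hz hirr hℓ2 h0ℓ2 hℓ2m hv h1v h2v⟩)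

end Stmt10
end

section
/- Let m1, m2 ≥ 1 and let W̃ = W̃(m1,m2). The assignments z ↦ −1, f1 ↦ ι(α_{m1}), f2 ↦ ι(β_{m2}), r1 ↦ −ι(α_{m1})·ι(α_1), r2 ↦ −ι(β_{m2})·ι(β_1) respect all defining relations of W̃ (in particular ι(α_p)² = 1, ι(β_q)² = 1, (ι(α_p)ι(β_q))² = −1 in 𝒞) and hence define a group homomorphism from W̃ to the group of units of the Clifford algebra 𝒞; moreover this homomorphism is injective. -/
namespace Stmt13

/-- Generators of the double cover `W̃(m1, m2)`. -/
inductive Gen | z | r1 | f1 | r2 | f2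

open FreeGroup in
/-- Defining relations of `W̃(m1, m2)`:
`r1^{m1} = z`, `r2^{m2} = z`, `f1^2 = 1`, `f2^2 = 1`, `(r1 f1)^2 = 1`, `(r2 f2)^2 = 1`,
`r1 r2 = r2 r1`, `r1 f2 = f2 r1`, `r2 f1 = f1 r2`, `(f1 f2)^2 = z`, `z^2 = 1`. -/
def rels (m1 m2 : ℕ) : Set (FreeGroup Gen) :=
  { of Gen.r1 ^ m1 * (of Gen.z)⁻¹,
    of Gen.r2 ^ m2 * (of Gen.z)⁻¹,
    of Gen.f1 ^ 2,
    of Gen.f2 ^ 2,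
    (of Gen.r1 * of Gen.f1) ^ 2,
    (of Gen.r2 * of Gen.f2) ^ 2,
    of Gen.r1 * of Gen.r2 * (of Gen.r2 * of Gen.r1)⁻¹,
    of Gen.r1 * of Gen.f2 * (of Gen.f2 * of Gen.r1)⁻¹,
    of Gen.r2 * of Gen.f1 * (of Gen.f1 * of Gen.r2)⁻¹,
    (of Gen.f1 * of Gen.f2) ^ 2 * (of Gen.z)⁻¹,
    of Gen.z ^ 2 }

/-- The double cover `W̃(m1, m2)` of `D_{2m1} × D_{2m2}`, as a presented group. -/
abbrev Wt (m1 m2 : ℕ) := PresentedGroup (rels m1 m2)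

def wz (m1 m2 : ℕ) : Wt m1 m2 := PresentedGroup.of Gen.z
def wr1 (m1 m2 : ℕ) : Wt m1 m2 := PresentedGroup.of Gen.r1
def wf1 (m1 m2 : ℕ) : Wt m1 m2 := PresentedGroup.of Gen.f1
def wr2 (m1 m2 : ℕ) : Wt m1 m2 := PresentedGroup.of Gen.r2
def wf2 (m1 m2 : ℕ) : Wt m1 m2 := PresentedGroup.of Gen.f2

/-- The quadratic form `Q(x) = x1² + x2² + x3² + x4²` on `ℂ⁴`. -/
noncomputable def Q4 : QuadraticForm ℂ (Fin 4 → ℂ) :=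
  QuadraticMap.weightedSumSquares ℂ (fun _ : Fin 4 => (1 : ℂ))

/-- The Clifford algebra `𝒞` of `Q4`. -/
abbrev Cl := CliffordAlgebra Q4

/-- The canonical generators `e_j = ι(standard basis vector)` of `𝒞`. -/
noncomputable def eC (j : Fin 4) : Cl := CliffordAlgebra.ι Q4 (Pi.single j 1)

/-- `θ_a = (e_{2a−1} + i e_{2a})/2` for `a ∈ {1,2}` (0-indexed `a : Fin 2`). -/
noncomputable def θ (a : Fin 2) : Cl :=
  (2 : ℂ)⁻¹ • (eC ⟨2 * a.val, by have := a.isLt; omega⟩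
    + Complex.I • eC ⟨2 * a.val + 1, by have := a.isLt; omega⟩)

/-- `θ̄_a = (e_{2a−1} − i e_{2a})/2` for `a ∈ {1,2}` (0-indexed `a : Fin 2`). -/
noncomputable def θbar (a : Fin 2) : Cl :=
  (2 : ℂ)⁻¹ • (eC ⟨2 * a.val, by have := a.isLt; omega⟩
    - Complex.I • eC ⟨2 * a.val + 1, by have := a.isLt; omega⟩)

/-- The root `α_p = (sin(pπ/m1), −cos(pπ/m1), 0, 0)` as a vector in `ℂ⁴`. -/
noncomputable def α (m1 : ℕ) (p : ℤ) : Fin 4 → ℂ :=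
  ![(Real.sin (p * Real.pi / m1) : ℂ), -(Real.cos (p * Real.pi / m1) : ℂ), 0, 0]

/-- The root `β_q = (0, 0, sin(qπ/m2), −cos(qπ/m2))` as a vector in `ℂ⁴`. -/
noncomputable def β (m2 : ℕ) (q : ℤ) : Fin 4 → ℂ :=
  ![0, 0, (Real.sin (q * Real.pi / m2) : ℂ), -(Real.cos (q * Real.pi / m2) : ℂ)]

/-!
The relations are checked in `𝒞`: `ι v * ι v = Q v` makes every `ι (α p)` and `ι (β q)` an
involution, `α p ⊥ β q` makes them anticommute, and `-(ι (α m1) * ι (α p))` is the image of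
`exp (i p π / m1)` under the real algebra map `ℂ → 𝒞` sending `i` to the bivector `e₁ e₂`; hence
`r1 ^ m1 ↦ exp (i π) = -1`. For injectivity, every element of `W̃` is `r1^a r2^b f1^c f2^d` with
`c, d ∈ {0, 1}`. In the spin representation `𝒞 → M₄(ℂ)`, where `e₁ e₂` and `e₃ e₄` act diagonally,
its image is `1` only if `c = d = 0`, `m1 ∣ a`, `m2 ∣ b` and `a / m1 + b / m2` is even, and then
the element is an even power of `z`, hence `1`.
-/

open CliffordAlgebra Complex ComplexConjugate

section AntiCommuting
variable {G : Type*} [Monoid G] [HasDistribNeg G] {a b x y : G}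

theorem mul_mul_self_eq_neg_one_of_anticomm (ha : a * a = 1) (hb : b * b = 1)
    (hab : a * b = -(b * a)) : a * b * (a * b) = -1 :=
  calc a * b * (a * b) = a * (b * a) * b := by simp only [mul_assoc]
    _ = -(a * a * (b * b)) := by
        rw [← neg_neg (b * a), ← hab]; simp only [mul_neg, neg_mul, mul_assoc]
    _ = -1 := by rw [ha, hb, one_mul]

theorem commute_mul_of_anticomm (hx : a * x = -(x * a)) (hy : a * y = -(y * a)) :
    Commute a (x * y) := by
  show a * (x * y) = x * y * a
  rw [← mul_assoc, hx, neg_mul, mul_assoc, hy, mul_neg, neg_neg, mul_assoc]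

theorem neg_mul_mul_sq_eq_one (ha : a * a = 1) (hb : b * b = 1) : (-(a * b) * a) ^ 2 = 1 := by
  rw [neg_mul, neg_sq, sq]
  calc a * b * a * (a * b * a) = a * b * (a * a) * b * a := by simp only [mul_assoc]
    _ = 1 := by rw [ha, mul_one, mul_assoc a b b, hb, mul_one, ha]

end AntiCommuting

theorem mul_zpow_eq_zpow_neg_mul {G : Type*} [Group G] {a b : G} (ha : a ^ 2 = 1)
    (hab : (b * a) ^ 2 = 1) (k : ℤ) : a * b ^ k = b ^ (-k) * a := by
  have h : SemiconjBy a b b⁻¹ := by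
    have h' : a * (b * a) = b⁻¹ := eq_inv_of_mul_eq_one_right (by rw [← mul_assoc, ← sq, hab])
    calc a * b = a * (b * a) * a := by rw [mul_assoc, mul_assoc, ← sq, ha, mul_one]
      _ = b⁻¹ * a := by rw [h']
  rw [zpow_neg, ← inv_zpow]
  exact h.zpow_right k

theorem _root_.IsPrimitiveRoot.pow_half {M : Type*} [CommMonoid M] {x : M} {m : ℕ}
    (hx : IsPrimitiveRoot x (2 * m)) (hm : m ≠ 0) : IsPrimitiveRoot (x ^ m) 2 := by
  simpa [Nat.mul_div_cancel _ (Nat.pos_of_ne_zero hm)] using hx.pow_of_dvd hm (dvd_mul_left m 2)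

theorem exists_eq_mul_of_zpow_mul_zpow_eq_one {K : Type*} [Field K] {x y : K} {m1 m2 : ℕ}
    (hm1 : m1 ≠ 0) (hm2 : m2 ≠ 0) (hx : IsPrimitiveRoot x (2 * m1))
    (hy : IsPrimitiveRoot y (2 * m2)) {a b : ℤ} (h₀ : x ^ a * y ^ b = 1)
    (h₁ : x ^ a * y ^ (-b) = 1) : ∃ n n' : ℤ, a = m1 * n ∧ b = m2 * n' ∧ 2 ∣ n + n' := by
  have hx0 : x ^ a ≠ 0 := zpow_ne_zero _ (hx.ne_zero (by omega))
  have hy0 : y ^ b ≠ 0 := zpow_ne_zero _ (hy.ne_zero (by omega))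
  have hxa : x ^ (2 * a) = 1 :=
    calc x ^ (2 * a) = (x ^ a * y ^ b) * (x ^ a * y ^ (-b)) := by
          rw [zpow_neg, mul_comm 2 a, zpow_mul]; field_simp
      _ = 1 := by rw [h₀, h₁, one_mul]
  have hyb : y ^ (2 * b) = 1 :=
    calc y ^ (2 * b) = (x ^ a * y ^ b) / (x ^ a * y ^ (-b)) := by
          rw [zpow_neg, mul_comm 2 b, zpow_mul]; field_simp
      _ = 1 := by rw [h₀, h₁, div_one]
  obtain ⟨n, rfl⟩ : (m1 : ℤ) ∣ a := by
    have := (hx.zpow_eq_one_iff_dvd _).mp hxa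
    push_cast at this
    exact (mul_dvd_mul_iff_left two_ne_zero).mp this
  obtain ⟨n', rfl⟩ : (m2 : ℤ) ∣ b := by
    have := (hy.zpow_eq_one_iff_dvd _).mp hyb
    push_cast at this
    exact (mul_dvd_mul_iff_left two_ne_zero).mp this
  refine ⟨n, n', rfl, rfl, ?_⟩
  have hxm : x ^ m1 = -1 := (hx.pow_half hm1).eq_neg_one_of_two_right
  have hneg : IsPrimitiveRoot (-1 : K) 2 := hxm ▸ hx.pow_half hm1
  rw [zpow_mul, zpow_mul, zpow_natCast, zpow_natCast, hxm,
    (hy.pow_half hm2).eq_neg_one_of_two_right, ← zpow_add₀ (by norm_num)] at h₀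
  exact_mod_cast (hneg.zpow_eq_one_iff_dvd _).mp h₀

section Clifford
variable {R M : Type*} [CommRing R] [AddCommGroup M] [Module R M] {Q : QuadraticForm R M}
  {u v : M}

theorem ι_mul_self_eq_one (hv : Q v = 1) : ι Q v * ι Q v = 1 := by
  rw [ι_sq_scalar, hv, map_one]

variable (Q) in
def ιUnit (hv : Q v = 1) : (CliffordAlgebra Q)ˣ :=
  ⟨ι Q v, ι Q v, ι_mul_self_eq_one hv, ι_mul_self_eq_one hv⟩

@[simp] theorem val_ιUnit (hv : Q v = 1) : (ιUnit Q hv : CliffordAlgebra Q) = ι Q v := rfl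

theorem ιUnit_mul_self (hv : Q v = 1) : ιUnit Q hv * ιUnit Q hv = 1 :=
  Units.ext (ι_mul_self_eq_one hv)

theorem ιUnit_mul_ιUnit_comm (hu : Q u = 1) (hv : Q v = 1) (huv : Q.IsOrtho u v) :
    ιUnit Q hu * ιUnit Q hv = -(ιUnit Q hv * ιUnit Q hu) :=
  Units.ext (ι_mul_ι_comm_of_isOrtho huv)

end Clifford

section Bivector
variable {M : Type*} [AddCommGroup M] [Module ℂ M] {Q : QuadraticForm ℂ M} {u v : M}

def bivectorLift (hu : Q u = 1) (hv : Q v = 1) (huv : Q.IsOrtho u v) :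
    ℂ →ₐ[ℝ] CliffordAlgebra Q :=
  Complex.lift ⟨ι Q u * ι Q v, mul_mul_self_eq_neg_one_of_anticomm (ι_mul_self_eq_one hu)
    (ι_mul_self_eq_one hv) (ι_mul_ι_comm_of_isOrtho huv)⟩

theorem bivectorLift_apply (hu : Q u = 1) (hv : Q v = 1) (huv : Q.IsOrtho u v) (z : ℂ) :
    bivectorLift hu hv huv z = algebraMap ℂ _ (z.re : ℂ) + (z.im : ℂ) • (ι Q u * ι Q v) := by
  rw [bivectorLift, Complex.lift_apply, Complex.liftAux_apply, IsScalarTower.algebraMap_apply ℝ ℂ,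
    Complex.coe_smul]
  rfl

theorem neg_ι_mul_ι_sin_smul_sub_cos_smul (hu : Q u = 1) (hv : Q v = 1) (huv : Q.IsOrtho u v)
    (θ : ℝ) :
    -(ι Q v * ι Q ((Real.sin θ : ℂ) • u - (Real.cos θ : ℂ) • v)) =
      bivectorLift hu hv huv (exp (θ * I)) := by
  rw [bivectorLift_apply, exp_ofReal_mul_I_re, exp_ofReal_mul_I_im, map_sub, map_smul, map_smul,
    mul_sub, mul_smul_comm, mul_smul_comm, ι_mul_self_eq_one hv, ι_mul_ι_comm_of_isOrtho huv.symm,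
    Algebra.algebraMap_eq_smul_one]
  simp only [smul_neg, neg_sub, sub_neg_eq_add]

end Bivector

theorem Q4_apply (v : Fin 4 → ℂ) : Q4 v = v 0 * v 0 + v 1 * v 1 + v 2 * v 2 + v 3 * v 3 := by
  simp [Q4, QuadraticMap.weightedSumSquares_apply, Fin.sum_univ_four]

theorem Q4_single (j : Fin 4) : Q4 (Pi.single j 1) = 1 := by
  rw [Q4_apply]; fin_cases j <;> simp

theorem isOrtho_single {i j : Fin 4} (h : i ≠ j) : Q4.IsOrtho (Pi.single i 1) (Pi.single j 1) := by
  rw [QuadraticMap.IsOrtho, Q4_apply, Q4_apply, Q4_apply]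
  fin_cases i <;> fin_cases j <;> simp_all

theorem Q4_α (m1 : ℕ) (p : ℤ) : Q4 (α m1 p) = 1 := by
  simp [Q4_apply, α, ← sq]

theorem Q4_β (m2 : ℕ) (q : ℤ) : Q4 (β m2 q) = 1 := by
  simp [Q4_apply, β, ← sq]

theorem isOrtho_α_β (m1 m2 : ℕ) (p q : ℤ) : Q4.IsOrtho (α m1 p) (β m2 q) := by
  simp [QuadraticMap.IsOrtho, Q4_apply, α, β]
  ring

theorem α_eq (m1 : ℕ) (p : ℤ) :
    α m1 p = (Real.sin (p * Real.pi / m1) : ℂ) • Pi.single 0 1 -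
      (Real.cos (p * Real.pi / m1) : ℂ) • Pi.single 1 1 := by
  ext j; fin_cases j <;> simp [α]

theorem β_eq (m2 : ℕ) (q : ℤ) :
    β m2 q = (Real.sin (q * Real.pi / m2) : ℂ) • Pi.single 2 1 -
      (Real.cos (q * Real.pi / m2) : ℂ) • Pi.single 3 1 := by
  ext j; fin_cases j <;> simp [β]

theorem α_self {m1 : ℕ} (hm1 : m1 ≠ 0) : α m1 m1 = Pi.single 1 1 := by
  rw [α_eq, Int.cast_natCast, mul_div_cancel_left₀ _ (Nat.cast_ne_zero.mpr hm1)]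
  simp

theorem β_self {m2 : ℕ} (hm2 : m2 ≠ 0) : β m2 m2 = Pi.single 3 1 := by
  rw [β_eq, Int.cast_natCast, mul_div_cancel_left₀ _ (Nat.cast_ne_zero.mpr hm2)]
  simp

noncomputable def liftα : ℂ →ₐ[ℝ] Cl :=
  bivectorLift (Q4_single 0) (Q4_single 1) (isOrtho_single (by decide))

noncomputable def liftβ : ℂ →ₐ[ℝ] Cl :=
  bivectorLift (Q4_single 2) (Q4_single 3) (isOrtho_single (by decide))

theorem neg_ι_α_self_mul_ι_α {m1 : ℕ} (hm1 : m1 ≠ 0) (p : ℤ) :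
    -(ι Q4 (α m1 m1) * ι Q4 (α m1 p)) = liftα (exp ((p * Real.pi / m1 : ℝ) * I)) := by
  rw [α_self hm1, α_eq]
  exact neg_ι_mul_ι_sin_smul_sub_cos_smul _ _ _ _

theorem neg_ι_β_self_mul_ι_β {m2 : ℕ} (hm2 : m2 ≠ 0) (q : ℤ) :
    -(ι Q4 (β m2 m2) * ι Q4 (β m2 q)) = liftβ (exp ((q * Real.pi / m2 : ℝ) * I)) := by
  rw [β_self hm2, β_eq]
  exact neg_ι_mul_ι_sin_smul_sub_cos_smul _ _ _ _

noncomputable def ζ (m : ℕ) : ℂ := exp ((Real.pi / m : ℝ) * I)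

theorem ζ_ne_zero (m : ℕ) : ζ m ≠ 0 := exp_ne_zero _

theorem isPrimitiveRoot_ζ {m : ℕ} (hm : m ≠ 0) : IsPrimitiveRoot (ζ m) (2 * m) := by
  rw [ζ]
  convert Complex.isPrimitiveRoot_exp (2 * m) (by omega) using 2
  push_cast
  field_simp

theorem conj_ζ_zpow (m : ℕ) (b : ℤ) : conj (ζ m ^ b) = ζ m ^ (-b) := by
  rw [zpow_neg, Complex.inv_eq_conj (by rw [norm_zpow, ζ, Complex.norm_exp_ofReal_mul_I, one_zpow])]

/-- Gamma matrices for `Q4`, chosen so that `γ 0 * γ 1` and `γ 2 * γ 3` are diagonal. -/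
def γ : Fin 4 → Matrix (Fin 4) (Fin 4) ℂ :=
  ![!![0, 0, 1, 0; 0, 0, 0, 1; 1, 0, 0, 0; 0, 1, 0, 0],
    !![0, 0, -I, 0; 0, 0, 0, -I; I, 0, 0, 0; 0, I, 0, 0],
    !![0, 1, 0, 0; 1, 0, 0, 0; 0, 0, 0, -1; 0, 0, -1, 0],
    !![0, -I, 0, 0; I, 0, 0, 0; 0, 0, 0, I; 0, 0, -I, 0]]

theorem linearCombination_γ_mul_self (v : Fin 4 → ℂ) :
    Fintype.linearCombination ℂ γ v * Fintype.linearCombination ℂ γ v =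
      algebraMap ℂ _ (Q4 v) := by
  ext i j
  fin_cases i <;> fin_cases j <;>
    simp [Fintype.linearCombination_apply, Fin.sum_univ_four, γ, Matrix.mul_apply, Q4_apply,
      Matrix.algebraMap_matrix_apply] <;> ring_nf <;> simp [I_sq] <;> ring

noncomputable def spinRep : Cl →ₐ[ℂ] Matrix (Fin 4) (Fin 4) ℂ :=
  CliffordAlgebra.lift Q4 ⟨Fintype.linearCombination ℂ γ, linearCombination_γ_mul_self⟩

theorem spinRep_ι_single (j : Fin 4) : spinRep (ι Q4 (Pi.single j 1)) = γ j := by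
  rw [spinRep, lift_ι_apply]
  simp

theorem spinRep_liftα (z : ℂ) : spinRep (liftα z) = Matrix.diagonal ![z, z, conj z, conj z] := by
  rw [liftα, bivectorLift_apply, map_add, map_smul, map_mul, AlgHom.commutes, spinRep_ι_single,
    spinRep_ι_single]
  ext i j
  fin_cases i <;> fin_cases j <;> simp [γ, Complex.ext_iff, Matrix.algebraMap_matrix_apply]

theorem spinRep_liftβ (z : ℂ) : spinRep (liftβ z) = Matrix.diagonal ![z, conj z, z, conj z] := by
  rw [liftβ, bivectorLift_apply, map_add, map_smul, map_mul, AlgHom.commutes, spinRep_ι_single,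
    spinRep_ι_single]
  ext i j
  fin_cases i <;> fin_cases j <;> simp [γ, Complex.ext_iff, Matrix.algebraMap_matrix_apply]

section Presentation
variable {m1 m2 : ℕ}

local notation "Z" => wz m1 m2
local notation "R1" => wr1 m1 m2
local notation "F1" => wf1 m1 m2
local notation "R2" => wr2 m1 m2
local notation "F2" => wf2 m1 m2

theorem wr1_pow : R1 ^ m1 = Z :=
  mul_inv_eq_one.mp (PresentedGroup.one_of_mem (by simp [rels]))

theorem wr2_pow : R2 ^ m2 = Z :=
  mul_inv_eq_one.mp (PresentedGroup.one_of_mem (by simp [rels]))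

theorem wf1_sq : F1 ^ 2 = 1 := PresentedGroup.one_of_mem (by simp [rels])

theorem wf2_sq : F2 ^ 2 = 1 := PresentedGroup.one_of_mem (by simp [rels])

theorem wr1_mul_wf1_sq : (R1 * F1) ^ 2 = 1 := PresentedGroup.one_of_mem (by simp [rels])

theorem wr2_mul_wf2_sq : (R2 * F2) ^ 2 = 1 := PresentedGroup.one_of_mem (by simp [rels])

theorem commute_wr1_wr2 : Commute R1 R2 :=
  mul_inv_eq_one.mp (PresentedGroup.one_of_mem (by simp [rels]))

theorem commute_wr1_wf2 : Commute R1 F2 :=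
  mul_inv_eq_one.mp (PresentedGroup.one_of_mem (by simp [rels]))

theorem commute_wr2_wf1 : Commute R2 F1 :=
  mul_inv_eq_one.mp (PresentedGroup.one_of_mem (by simp [rels]))

theorem wf1_mul_wf2_sq : (F1 * F2) ^ 2 = Z :=
  mul_inv_eq_one.mp (PresentedGroup.one_of_mem (by simp [rels]))

theorem wz_sq : Z ^ 2 = 1 := PresentedGroup.one_of_mem (by simp [rels])

theorem wf1_inv : F1⁻¹ = F1 := inv_eq_of_mul_eq_one_right (by rw [← sq, wf1_sq])

theorem wf2_inv : F2⁻¹ = F2 := inv_eq_of_mul_eq_one_right (by rw [← sq, wf2_sq])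

theorem commute_wz (g : Wt m1 m2) : Commute Z g := by
  suffices h : Subgroup.closure (Set.range PresentedGroup.of) ≤ Subgroup.centralizer {Z} by
    exact (Subgroup.mem_centralizer_singleton_iff.mp
      (h (by rw [PresentedGroup.closure_range_of]; trivial))).symm
  rw [Subgroup.closure_le]
  rintro _ ⟨x, rfl⟩
  rw [SetLike.mem_coe, Subgroup.mem_centralizer_singleton_iff]
  symm
  cases x
  · exact Commute.refl _
  · rw [← wr1_pow]; exact Commute.pow_self _ _
  · rw [← wr2_pow]; exact commute_wr2_wf1.pow_left _
  · rw [← wr2_pow]; exact Commute.pow_self _ _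
  · rw [← wr1_pow]; exact commute_wr1_wf2.pow_left _

variable (m1 m2) in
def normalForm (a b : ℤ) (c d : Bool) : Wt m1 m2 := R1 ^ a * R2 ^ b * cond c F1 1 * cond d F2 1

theorem normalForm_mul_wr1_zpow (a b : ℤ) (c d : Bool) (k : ℤ) :
    normalForm m1 m2 a b c d * R1 ^ k = normalForm m1 m2 (a + cond c (-k) k) b c d := by
  have hC : cond c F1 1 * R1 ^ k = R1 ^ cond c (-k) k * cond c F1 1 := by
    cases c
    · simp
    · exact mul_zpow_eq_zpow_neg_mul wf1_sq wr1_mul_wf1_sq k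
  have hD : cond d F2 1 * R1 ^ k = R1 ^ k * cond d F2 1 := by
    cases d
    · simp
    · exact ((commute_wr1_wf2.zpow_left k).eq).symm
  calc normalForm m1 m2 a b c d * R1 ^ k
      = R1 ^ a * R2 ^ b * cond c F1 1 * (cond d F2 1 * R1 ^ k) := by
        simp only [normalForm, mul_assoc]
    _ = R1 ^ a * (R2 ^ b * R1 ^ cond c (-k) k) * cond c F1 1 * cond d F2 1 := by
        rw [hD, ← mul_assoc, mul_assoc _ (cond c F1 1), hC]; simp only [mul_assoc]
    _ = normalForm m1 m2 (a + cond c (-k) k) b c d := by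
        rw [((commute_wr1_wr2.zpow_zpow _ _).eq).symm, normalForm, zpow_add]
        simp only [mul_assoc]

theorem normalForm_mul_wr2_zpow (a b : ℤ) (c d : Bool) (k : ℤ) :
    normalForm m1 m2 a b c d * R2 ^ k = normalForm m1 m2 a (b + cond d (-k) k) c d := by
  have hC : ∀ j : ℤ, cond c F1 1 * R2 ^ j = R2 ^ j * cond c F1 1 := by
    cases c
    · simp
    · exact fun j ↦ ((commute_wr2_wf1.zpow_left j).eq).symm
  have hD : cond d F2 1 * R2 ^ k = R2 ^ cond d (-k) k * cond d F2 1 := by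
    cases d
    · simp
    · exact mul_zpow_eq_zpow_neg_mul wf2_sq wr2_mul_wf2_sq k
  calc normalForm m1 m2 a b c d * R2 ^ k
      = R1 ^ a * R2 ^ b * (cond c F1 1 * (cond d F2 1 * R2 ^ k)) := by
        simp only [normalForm, mul_assoc]
    _ = normalForm m1 m2 a (b + cond d (-k) k) c d := by
        rw [hD, ← mul_assoc (cond c F1 1), hC, normalForm, zpow_add]
        simp only [mul_assoc]

theorem wz_mul_normalForm (a b : ℤ) (c d : Bool) :
    Z * normalForm m1 m2 a b c d = normalForm m1 m2 (a + m1) b c d := by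
  rw [normalForm, normalForm, zpow_add, ← wr1_pow, ← zpow_natCast,
    (Commute.zpow_zpow_self _ _ _).eq]
  simp only [mul_assoc]

theorem normalForm_mul_wf2 (a b : ℤ) (c d : Bool) :
    normalForm m1 m2 a b c d * F2 = normalForm m1 m2 a b c (!d) := by
  cases d
  · simp [normalForm]
  · simp [normalForm, mul_assoc, ← sq, wf2_sq]

theorem wf2_mul_wf1 : F2 * F1 = Z * (F1 * F2) := by
  have hZ : Z⁻¹ = Z := inv_eq_of_mul_eq_one_right (by rw [← sq, wz_sq])
  calc F2 * F1 = (F1 * F2)⁻¹ := by rw [mul_inv_rev, wf1_inv, wf2_inv]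
    _ = ((F1 * F2) ^ 2)⁻¹ * (F1 * F2) := by rw [sq, mul_inv_rev (F1 * F2), inv_mul_cancel_right]
    _ = Z * (F1 * F2) := by rw [wf1_mul_wf2_sq, hZ]

theorem normalForm_mul_wf1 (a b : ℤ) (c d : Bool) :
    normalForm m1 m2 a b c d * F1 = normalForm m1 m2 (a + cond d (m1 : ℤ) 0) b (!c) d := by
  have hC : cond c F1 1 * F1 = cond (!c) F1 1 := by
    cases c
    · simp
    · simp [← sq, wf1_sq]
  cases d
  · simp only [normalForm, cond_false, mul_one, add_zero, mul_assoc, hC]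
  · calc normalForm m1 m2 a b c true * F1
        = R1 ^ a * R2 ^ b * cond c F1 1 * (F2 * F1) := by
          simp only [normalForm, cond_true, mul_assoc]
      _ = Z * (R1 ^ a * R2 ^ b * (cond c F1 1 * F1) * F2) := by
          rw [wf2_mul_wf1, ← mul_assoc, ← (commute_wz _).eq]
          simp only [mul_assoc]
      _ = normalForm m1 m2 (a + m1) b (!c) true := by
          rw [hC, ← wz_mul_normalForm]; rfl

theorem exists_normalForm_mul_of (a b : ℤ) (c d : Bool) (g : Gen) :
    ∃ a' b' c' d', normalForm m1 m2 a b c d * .of g = normalForm m1 m2 a' b' c' d' := by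
  cases g
  · change ∃ _ _ _ _, _ * Z = _
    exact ⟨_, _, _, _, by rw [← wr1_pow, ← zpow_natCast, normalForm_mul_wr1_zpow]⟩
  · change ∃ _ _ _ _, _ * R1 = _
    exact ⟨_, _, _, _, by rw [← zpow_one R1, normalForm_mul_wr1_zpow]⟩
  · exact ⟨_, _, _, _, normalForm_mul_wf1 a b c d⟩
  · change ∃ _ _ _ _, _ * R2 = _
    exact ⟨_, _, _, _, by rw [← zpow_one R2, normalForm_mul_wr2_zpow]⟩
  · exact ⟨_, _, _, _, normalForm_mul_wf2 a b c d⟩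

theorem exists_normalForm_mul_inv_of (a b : ℤ) (c d : Bool) (g : Gen) :
    ∃ a' b' c' d', normalForm m1 m2 a b c d * (.of g)⁻¹ = normalForm m1 m2 a' b' c' d' := by
  cases g
  · change ∃ _ _ _ _, _ * Z⁻¹ = _
    exact ⟨_, _, _, _, by rw [← wr1_pow, ← zpow_natCast, ← zpow_neg, normalForm_mul_wr1_zpow]⟩
  · change ∃ _ _ _ _, _ * R1⁻¹ = _
    exact ⟨_, _, _, _, by rw [← zpow_neg_one, normalForm_mul_wr1_zpow]⟩
  · change ∃ _ _ _ _, _ * F1⁻¹ = _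
    exact ⟨_, _, _, _, by rw [wf1_inv, normalForm_mul_wf1]⟩
  · change ∃ _ _ _ _, _ * R2⁻¹ = _
    exact ⟨_, _, _, _, by rw [← zpow_neg_one, normalForm_mul_wr2_zpow]⟩
  · change ∃ _ _ _ _, _ * F2⁻¹ = _
    exact ⟨_, _, _, _, by rw [wf2_inv, normalForm_mul_wf2]⟩

theorem exists_normalForm (w : Wt m1 m2) : ∃ a b c d, w = normalForm m1 m2 a b c d := by
  have hw : w ∈ Subgroup.closure (Set.range PresentedGroup.of) := by
    rw [PresentedGroup.closure_range_of]; trivial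
  induction hw using Subgroup.closure_induction_right with
  | one => exact ⟨0, 0, false, false, by simp [normalForm]⟩
  | mul_right _ _ _ hg ih =>
    obtain ⟨a, b, c, d, rfl⟩ := ih
    obtain ⟨g, rfl⟩ := hg
    exact exists_normalForm_mul_of a b c d g
  | mul_inv_cancel _ _ _ hg ih =>
    obtain ⟨a, b, c, d, rfl⟩ := ih
    obtain ⟨g, rfl⟩ := hg
    exact exists_normalForm_mul_inv_of a b c d g

theorem normalForm_mul_mul_eq_one {n n' : ℤ} (h : 2 ∣ n + n') :
    normalForm m1 m2 (m1 * n) (m2 * n') false false = 1 := by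
  obtain ⟨k, hk⟩ := h
  rw [normalForm, zpow_mul, zpow_mul, zpow_natCast, zpow_natCast, wr1_pow, wr2_pow, ← zpow_add, hk,
    zpow_mul, zpow_two, ← sq, wz_sq, one_zpow]
  simp

end Presentation

noncomputable def genImage (m1 m2 : ℕ) : Gen → Clˣ
  | .z => -1
  | .r1 => -(ιUnit Q4 (Q4_α m1 m1) * ιUnit Q4 (Q4_α m1 1))
  | .f1 => ιUnit Q4 (Q4_α m1 m1)
  | .r2 => -(ιUnit Q4 (Q4_β m2 m2) * ιUnit Q4 (Q4_β m2 1))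
  | .f2 => ιUnit Q4 (Q4_β m2 m2)

section Representation
variable {m1 m2 : ℕ}

theorem genImage_r1 (hm1 : m1 ≠ 0) :
    genImage m1 m2 .r1 = Units.map (liftα : ℂ →* Cl) (Units.mk0 (ζ m1) (ζ_ne_zero m1)) := by
  ext
  simpa [genImage, ζ] using neg_ι_α_self_mul_ι_α hm1 1

theorem genImage_r2 (hm2 : m2 ≠ 0) :
    genImage m1 m2 .r2 = Units.map (liftβ : ℂ →* Cl) (Units.mk0 (ζ m2) (ζ_ne_zero m2)) := by
  ext
  simpa [genImage, ζ] using neg_ι_β_self_mul_ι_β hm2 1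

theorem genImage_rels (hm1 : m1 ≠ 0) (hm2 : m2 ≠ 0) :
    ∀ r ∈ rels m1 m2, FreeGroup.lift (genImage m1 m2) r = 1 := by
  have hαβ (p q : ℤ) := ιUnit_mul_ιUnit_comm (Q4_α m1 p) (Q4_β m2 q) (isOrtho_α_β m1 m2 p q)
  have hβα (q p : ℤ) :=
    ιUnit_mul_ιUnit_comm (Q4_β m2 q) (Q4_α m1 p) (isOrtho_α_β m1 m2 p q).symm
  intro r hr
  simp only [rels, Set.mem_insert_iff, Set.mem_singleton_iff] at hr
  rcases hr with rfl | rfl | rfl | rfl | rfl | rfl | rfl | rfl | rfl | rfl | rfl <;>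
    simp only [map_mul, map_pow, map_inv, FreeGroup.lift_apply_of, mul_inv_eq_one]
  · rw [genImage_r1 hm1, ← map_pow]
    ext
    simp only [Units.coe_map, Units.val_pow_eq_pow_val, Units.val_mk0, MonoidHom.coe_coe,
      ((isPrimitiveRoot_ζ hm1).pow_half hm1).eq_neg_one_of_two_right, map_neg, map_one,
      genImage, Units.val_neg, Units.val_one]
  · rw [genImage_r2 hm2, ← map_pow]
    ext
    simp only [Units.coe_map, Units.val_pow_eq_pow_val, Units.val_mk0, MonoidHom.coe_coe,
      ((isPrimitiveRoot_ζ hm2).pow_half hm2).eq_neg_one_of_two_right, map_neg, map_one,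
      genImage, Units.val_neg, Units.val_one]
  · rw [sq]; exact ιUnit_mul_self (Q4_α m1 m1)
  · rw [sq]; exact ιUnit_mul_self (Q4_β m2 m2)
  · exact neg_mul_mul_sq_eq_one (ιUnit_mul_self _) (ιUnit_mul_self _)
  · exact neg_mul_mul_sq_eq_one (ιUnit_mul_self _) (ιUnit_mul_self _)
  · exact ((commute_mul_of_anticomm (hαβ _ _) (hαβ _ _)).mul_left
      (commute_mul_of_anticomm (hαβ _ _) (hαβ _ _))).neg_left.neg_right.eq
  · exact (commute_mul_of_anticomm (hβα _ _) (hβα _ _)).symm.neg_left.eq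
  · exact (commute_mul_of_anticomm (hαβ _ _) (hαβ _ _)).symm.neg_left.eq
  · exact (sq _).trans (mul_mul_self_eq_neg_one_of_anticomm (ιUnit_mul_self (Q4_α m1 m1))
      (ιUnit_mul_self (Q4_β m2 m2)) (hαβ _ _))
  · exact neg_one_sq

variable (hm1 : m1 ≠ 0) (hm2 : m2 ≠ 0)

noncomputable def cliffordRep : Wt m1 m2 →* Clˣ :=
  PresentedGroup.toGroup (genImage_rels hm1 hm2)

theorem cliffordRep_of (g : Gen) : cliffordRep hm1 hm2 (.of g) = genImage m1 m2 g :=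
  PresentedGroup.toGroup.of _

theorem val_cliffordRep_wr1_zpow (a : ℤ) :
    (cliffordRep hm1 hm2 (wr1 m1 m2 ^ a) : Cl) = liftα (ζ m1 ^ a) := by
  rw [map_zpow, wr1, cliffordRep_of, genImage_r1 hm1,
    ← map_zpow (Units.map (liftα : ℂ →* Cl))]
  simp only [Units.coe_map, Units.val_zpow_eq_zpow_val, Units.val_mk0, MonoidHom.coe_coe]

theorem val_cliffordRep_wr2_zpow (b : ℤ) :
    (cliffordRep hm1 hm2 (wr2 m1 m2 ^ b) : Cl) = liftβ (ζ m2 ^ b) := by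
  rw [map_zpow, wr2, cliffordRep_of, genImage_r2 hm2,
    ← map_zpow (Units.map (liftβ : ℂ →* Cl))]
  simp only [Units.coe_map, Units.val_zpow_eq_zpow_val, Units.val_mk0, MonoidHom.coe_coe]

theorem val_cliffordRep_normalForm (a b : ℤ) (c d : Bool) :
    (cliffordRep hm1 hm2 (normalForm m1 m2 a b c d) : Cl) =
      liftα (ζ m1 ^ a) * liftβ (ζ m2 ^ b) *
        cond c (ι Q4 (Pi.single 1 1)) 1 * cond d (ι Q4 (Pi.single 3 1)) 1 := by
  rw [normalForm, map_mul, map_mul, map_mul, Units.val_mul, Units.val_mul, Units.val_mul,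
    val_cliffordRep_wr1_zpow, val_cliffordRep_wr2_zpow]
  cases c <;> cases d <;> simp [wf1, wf2, cliffordRep_of, genImage, α_self hm1, β_self hm2]

theorem spinRep_cliffordRep_normalForm (a b : ℤ) (c d : Bool) :
    spinRep (cliffordRep hm1 hm2 (normalForm m1 m2 a b c d) : Cl) =
      Matrix.diagonal ![ζ m1 ^ a * ζ m2 ^ b, ζ m1 ^ a * ζ m2 ^ (-b),
        ζ m1 ^ (-a) * ζ m2 ^ b, ζ m1 ^ (-a) * ζ m2 ^ (-b)] *
        (cond c (γ 1) 1 * cond d (γ 3) 1) := by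
  rw [val_cliffordRep_normalForm, map_mul, map_mul, map_mul, spinRep_liftα, spinRep_liftβ,
    Matrix.diagonal_mul_diagonal, mul_assoc, Bool.apply_cond spinRep, Bool.apply_cond spinRep,
    map_one, spinRep_ι_single, spinRep_ι_single, conj_ζ_zpow, conj_ζ_zpow]
  congr 2
  ext i
  fin_cases i <;> rfl

theorem cliffordRep_injective : Function.Injective (cliffordRep hm1 hm2) := by
  rw [injective_iff_map_eq_one]
  intro w hw
  obtain ⟨a, b, c, d, rfl⟩ := exists_normalForm w
  have h := spinRep_cliffordRep_normalForm hm1 hm2 a b c d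
  rw [hw, Units.val_one, map_one] at h
  have h₀ := congrFun (congrFun h 0) 0
  have h₁ := congrFun (congrFun h 1) 1
  -- `γ 1`, `γ 3` and `γ 1 * γ 3` vanish at `(0, 0)`, so `h₀` rules out `c` or `d` being `true`.
  cases c <;> cases d <;> simp [γ, Matrix.mul_apply, Fin.sum_univ_four, -zpow_neg] at h₀ h₁
  obtain ⟨n, n', rfl, rfl, hn⟩ := exists_eq_mul_of_zpow_mul_zpow_eq_one hm1 hm2
    (isPrimitiveRoot_ζ hm1) (isPrimitiveRoot_ζ hm2) h₀.symm h₁.symm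
  exact normalForm_mul_mul_eq_one hn

end Representation

/-- The assignments `z ↦ −1`, `f1 ↦ ι(α_{m1})`, `f2 ↦ ι(β_{m2})`,
`r1 ↦ −ι(α_{m1})ι(α_1)`, `r2 ↦ −ι(β_{m2})ι(β_1)` respect the defining relations of
`W̃(m1,m2)` (in particular `ι(α_p)² = 1`, `ι(β_q)² = 1`, `(ι(α_p)ι(β_q))² = −1`) and
define an injective group homomorphism from `W̃(m1,m2)` to the units of `𝒞`. -/
theorem embedding_into_clifford_units (m1 m2 : ℕ) (h1 : 1 ≤ m1) (h2 : 1 ≤ m2) :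
    (∀ p q : ℤ,
      CliffordAlgebra.ι Q4 (α m1 p) * CliffordAlgebra.ι Q4 (α m1 p) = 1 ∧
      CliffordAlgebra.ι Q4 (β m2 q) * CliffordAlgebra.ι Q4 (β m2 q) = 1 ∧
      (CliffordAlgebra.ι Q4 (α m1 p) * CliffordAlgebra.ι Q4 (β m2 q))
        * (CliffordAlgebra.ι Q4 (α m1 p) * CliffordAlgebra.ι Q4 (β m2 q)) = -1) ∧
    (∃ φ : Wt m1 m2 →* Clˣ,
      Function.Injective φ ∧
      ((φ (wz m1 m2) : Cl) = -1) ∧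
      ((φ (wf1 m1 m2) : Cl) = CliffordAlgebra.ι Q4 (α m1 m1)) ∧
      ((φ (wf2 m1 m2) : Cl) = CliffordAlgebra.ι Q4 (β m2 m2)) ∧
      ((φ (wr1 m1 m2) : Cl)
        = -(CliffordAlgebra.ι Q4 (α m1 m1) * CliffordAlgebra.ι Q4 (α m1 1))) ∧
      ((φ (wr2 m1 m2) : Cl)
        = -(CliffordAlgebra.ι Q4 (β m2 m2) * CliffordAlgebra.ι Q4 (β m2 1)))) := by
  have hm1 : m1 ≠ 0 := Nat.one_le_iff_ne_zero.mp h1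
  have hm2 : m2 ≠ 0 := Nat.one_le_iff_ne_zero.mp h2
  refine ⟨fun p q ↦ ⟨ι_mul_self_eq_one (Q4_α m1 p), ι_mul_self_eq_one (Q4_β m2 q),
      mul_mul_self_eq_neg_one_of_anticomm (ι_mul_self_eq_one (Q4_α m1 p))
        (ι_mul_self_eq_one (Q4_β m2 q)) (ι_mul_ι_comm_of_isOrtho (isOrtho_α_β m1 m2 p q))⟩,
    cliffordRep hm1 hm2, cliffordRep_injective hm1 hm2, ?_⟩
  simp [wz, wf1, wf2, wr1, wr2, cliffordRep_of, genImage]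

end Stmt13
end
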